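/- arXiv:1811.00691 — 11 statements merged into one kernel-verified Lean document; each statement's English description precedes it below -/
import Mathlib

section
/- If a directed graph G on n nodes is (r,s)-robust with r ≥ 1, then G has a directed spanning tree. Moreover, G is 1-robust if and only if G has a directed spanning tree. -/
/- A directed graph on `n` nodes is given by its neighbor sets:
`j ∈ Nb i` means `(j, i)` is an edge, i.e. node `j` can send information to node `i`. -/

/-- `reachSet Nb r S` is the set `X^r_S` of nodes of `S` having at least `r`
neighbors outside `S`. -/
def reachSet {n : ℕ} (Nb : Fin n → Finset (Fin n)) (r : ℕ) (S : Finset (Fin n)) :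
    Finset (Fin n) :=
  S.filter fun i => r ≤ ((Nb i) \ S).card

/-- `(r,s)`-robustness of the directed graph given by neighbor sets `Nb`. -/
def IsRobust {n : ℕ} (Nb : Fin n → Finset (Fin n)) (r s : ℕ) : Prop :=
  ∀ V1 V2 : Finset (Fin n), V1.Nonempty → V2.Nonempty → Disjoint V1 V2 →
    reachSet Nb r V1 = V1 ∨ reachSet Nb r V2 = V2 ∨
      s ≤ (reachSet Nb r V1).card + (reachSet Nb r V2).card

open Classical in
/-- The set of nodes that can reach `i` along directed edges. -/
noncomputable def reachTo {n : ℕ} (Nb : Fin n → Finset (Fin n)) (i : Fin n) :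
    Finset (Fin n) :=
  Finset.univ.filter fun u => Relation.ReflTransGen (fun a b => a ∈ Nb b) u i

lemma mem_reachTo {n : ℕ} {Nb : Fin n → Finset (Fin n)} {i u : Fin n} :
    u ∈ reachTo Nb i ↔ Relation.ReflTransGen (fun a b => a ∈ Nb b) u i := by
  simp [reachTo]

lemma self_mem_reachTo {n : ℕ} (Nb : Fin n → Finset (Fin n)) (i : Fin n) :
    i ∈ reachTo Nb i := mem_reachTo.2 .refl

lemma reachTo_subset {n : ℕ} {Nb : Fin n → Finset (Fin n)} {i u : Fin n}
    (hu : u ∈ reachTo Nb i) : reachTo Nb u ⊆ reachTo Nb i := fun w hw =>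
  mem_reachTo.2 ((mem_reachTo.1 hw).trans (mem_reachTo.1 hu))

lemma nb_subset_reachTo {n : ℕ} {Nb : Fin n → Finset (Fin n)} {i v : Fin n}
    (hv : v ∈ reachTo Nb i) : Nb v ⊆ reachTo Nb i := fun u hu =>
  mem_reachTo.2 (Relation.ReflTransGen.head hu (mem_reachTo.1 hv))

lemma reachSet_reachTo {n : ℕ} (Nb : Fin n → Finset (Fin n)) {r : ℕ} (hr : 1 ≤ r)
    (i : Fin n) : reachSet Nb r (reachTo Nb i) = ∅ := by
  ext w
  simp only [reachSet, Finset.mem_filter, Finset.notMem_empty, iff_false, not_and]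
  intro hw
  rw [Finset.sdiff_eq_empty_iff_subset.2 (nb_subset_reachTo hw)]
  simp only [Finset.card_empty]; omega

/-- If the graph is `(r,s)`-robust with `r, s ≥ 1`, it has a spanning tree. -/
lemma robust_to_root {n r s : ℕ} (Nb : Fin n → Finset (Fin n))
    (hn : 0 < n) (hr1 : 1 ≤ r) (hs1 : 1 ≤ s) (h : IsRobust Nb r s) :
    ∃ root : Fin n, ∀ i : Fin n,
      Relation.ReflTransGen (fun u v => u ∈ Nb v) root i := by
  have : Nonempty (Fin n) := ⟨⟨0, hn⟩⟩
  obtain ⟨a, -, ha⟩ := Finset.exists_min_image Finset.univ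
    (fun i => (reachTo Nb i).card) Finset.univ_nonempty
  by_cases hall : ∀ b : Fin n, reachTo Nb a ⊆ reachTo Nb b
  · exact ⟨a, fun i => mem_reachTo.1 (hall i (self_mem_reachTo Nb a))⟩
  · exfalso
    push_neg at hall
    obtain ⟨b, hb⟩ := hall
    obtain ⟨u, hua, hub⟩ := Finset.not_subset.1 hb
    have hdisj : Disjoint (reachTo Nb u) (reachTo Nb b) := by
      rw [Finset.disjoint_left]
      intro w hwu hwb
      have h1 : reachTo Nb w ⊆ reachTo Nb a :=
        (reachTo_subset hwu).trans (reachTo_subset hua)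
      have h2 : reachTo Nb w = reachTo Nb a :=
        (Finset.eq_of_subset_of_card_le h1 (ha w (Finset.mem_univ w))).symm ▸ rfl
      have h2 : reachTo Nb w = reachTo Nb a :=
        Finset.eq_of_subset_of_card_le h1 (ha w (Finset.mem_univ w))
      have huw : u ∈ reachTo Nb w := h2 ▸ hua
      exact hub (reachTo_subset hwb (reachTo_subset huw (self_mem_reachTo Nb u)))
    rcases h (reachTo Nb u) (reachTo Nb b) ⟨u, self_mem_reachTo Nb u⟩
      ⟨b, self_mem_reachTo Nb b⟩ hdisj with h1 | h1 | h1
    · rw [reachSet_reachTo Nb hr1] at h1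
      exact absurd h1.symm (Finset.nonempty_iff_ne_empty.1 ⟨u, self_mem_reachTo Nb u⟩)
    · rw [reachSet_reachTo Nb hr1] at h1
      exact absurd h1.symm (Finset.nonempty_iff_ne_empty.1 ⟨b, self_mem_reachTo Nb b⟩)
    · rw [reachSet_reachTo Nb hr1, reachSet_reachTo Nb hr1] at h1
      simp at h1
      omega

/-- A path entering a set from outside gives a node of the set with an outside neighbor. -/
lemma exists_entry {n : ℕ} (Nb : Fin n → Finset (Fin n)) {root : Fin n}
    {S : Finset (Fin n)} (hroot : root ∉ S) {v : Fin n}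
    (hv : Relation.ReflTransGen (fun a b => a ∈ Nb b) root v) (hvS : v ∈ S) :
    (reachSet Nb 1 S).Nonempty := by
  suffices H : ∀ w : Fin n, Relation.ReflTransGen (fun a b => a ∈ Nb b) root w →
      w ∈ S → (reachSet Nb 1 S).Nonempty from H v hv hvS
  intro w hw
  induction hw with
  | refl => exact fun hc => absurd hc hroot
  | @tail b c hb e ih =>
    intro hc
    by_cases hbS : b ∈ S
    · exact ih hbS
    · refine ⟨c, ?_⟩
      simp only [reachSet, Finset.mem_filter]
      exact ⟨hc, Finset.card_pos.2 ⟨b, Finset.mem_sdiff.2 ⟨e, hbS⟩⟩⟩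

lemma root_to_robust {n : ℕ} (Nb : Fin n → Finset (Fin n)) (root : Fin n)
    (hroot : ∀ i : Fin n, Relation.ReflTransGen (fun u v => u ∈ Nb v) root i) :
    IsRobust Nb 1 1 := by
  intro V1 V2 h1 h2 hdisj
  right; right
  by_cases hr1 : root ∈ V1
  · have hr2 : root ∉ V2 := Finset.disjoint_left.1 hdisj hr1
    obtain ⟨v, hv⟩ := h2
    obtain ⟨w, hw⟩ := exists_entry Nb hr2 (hroot v) hv
    have := Finset.card_pos.2 ⟨w, hw⟩
    omega
  · obtain ⟨v, hv⟩ := h1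
    obtain ⟨w, hw⟩ := exists_entry Nb hr1 (hroot v) hv
    have := Finset.card_pos.2 ⟨w, hw⟩
    omega

/-- If `G` is `(r,s)`-robust with `r ≥ 1`, then `G` has a directed spanning tree,
i.e. there is a node from which every node is reachable along directed edges.
Moreover, `G` is `1`-robust if and only if it has a directed spanning tree. -/
theorem robust_spanning_tree {n r s : ℕ} (Nb : Fin n → Finset (Fin n))
    (hn : 1 < n) (hr1 : 1 ≤ r) (hrn : r < n) (hs1 : 1 ≤ s) (hsn : s < n)
    (h : IsRobust Nb r s) :
    (∃ root : Fin n, ∀ i : Fin n,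
        Relation.ReflTransGen (fun u v => u ∈ Nb v) root i) ∧
    (IsRobust Nb 1 1 ↔
      ∃ root : Fin n, ∀ i : Fin n,
        Relation.ReflTransGen (fun u v => u ∈ Nb v) root i) := by
  refine ⟨robust_to_root Nb (by omega) hr1 hs1 h, ?_, ?_⟩
  · intro h1
    exact robust_to_root Nb (by omega) le_rfl le_rfl h1
  · rintro ⟨root, hroot⟩
    exact root_to_robust Nb root hroot
end

section
/- If a directed graph G on n nodes is (r,s)-robust, then r ≤ ⌈n/2⌉, where ⌈·⌉ denotes the ceiling function. -/
/-! If `r` exceeds both `|S|` and `|Sᶜ|` for some nonempty proper `S`, then no node has `r`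
neighbors on the other side of the partition `S, Sᶜ`, so both `X^r_S` and `X^r_{Sᶜ}` are empty
and robustness fails. A set `S` with `|S| = ⌈n/2⌉` has `|Sᶜ| = ⌊n/2⌋ ≤ |S|`. -/

open Finset

variable {n : ℕ} (Nb : Fin n → Finset (Fin n))

theorem reachSet_eq_empty_of_card_compl_lt {r : ℕ} {S : Finset (Fin n)} (hS : #Sᶜ < r) :
    reachSet Nb r S = ∅ := by
  refine filter_false_of_mem fun i _ hi => ?_
  have : #(Nb i \ S) ≤ #Sᶜ :=
    card_le_card fun x hx => mem_compl.2 (mem_sdiff.1 hx).2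
  omega

theorem IsRobust.le_max_card_compl {r s : ℕ} (h : IsRobust Nb r s) (hs : 0 < s)
    {S : Finset (Fin n)} (hS : S.Nonempty) (hSc : Sᶜ.Nonempty) : r ≤ max #S #Sᶜ := by
  by_contra! hr
  obtain ⟨hSr, hScr⟩ := max_lt_iff.1 hr
  have hX : reachSet Nb r S = ∅ := reachSet_eq_empty_of_card_compl_lt Nb hScr
  have hXc : reachSet Nb r Sᶜ = ∅ :=
    reachSet_eq_empty_of_card_compl_lt Nb (by rwa [compl_compl])
  rcases h S Sᶜ hS hSc disjoint_compl_right with h' | h' | h'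
  · exact hS.ne_empty (h' ▸ hX)
  · exact hSc.ne_empty (h' ▸ hXc)
  · simp only [hX, hXc, card_empty] at h'
    omega

theorem robust_r_le_ceil_general {n r s : ℕ} (Nb : Fin n → Finset (Fin n))
    (hrn : r < n) (hs1 : 1 ≤ s) (h : IsRobust Nb r s) :
    r ≤ (n + 1) / 2 := by
  by_contra! hr
  obtain ⟨S, -, hcard⟩ : ∃ S ⊆ (univ : Finset (Fin n)), #S = (n + 1) / 2 :=
    exists_subset_card_eq (by rw [card_univ, Fintype.card_fin]; omega)
  have hcardc : #Sᶜ = n - (n + 1) / 2 := by rw [card_compl, Fintype.card_fin, hcard]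
  have hS : S.Nonempty := card_pos.1 (by omega)
  have hSc : Sᶜ.Nonempty := card_pos.1 (by omega)
  have hle := h.le_max_card_compl Nb hs1 hS hSc
  rw [hcard, hcardc] at hle
  omega

/-- If `G` on `n` nodes is `(r,s)`-robust, then `r ≤ ⌈n/2⌉` (here `⌈n/2⌉ = (n+1)/2`
in natural-number arithmetic). -/
theorem robust_r_le_ceil {n r s : ℕ} (Nb : Fin n → Finset (Fin n))
    (hrn : r < n) (hs1 : 1 ≤ s) (hsn : s < n) (h : IsRobust Nb r s) :
    r ≤ (n + 1) / 2 :=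
  robust_r_le_ceil_general Nb hrn hs1 h
end

section
/- If a directed graph G on n nodes is (r,s)-robust with r ≥ 1, then the degree d_i = |N_i| of every node i satisfies: d_i ≥ r+s−1 if s < r, and d_i ≥ 2r−2 if s ≥ r. -/
lemma robust_degree_aux {n r s : ℕ} (Nb : Fin n → Finset (Fin n))
    (h : IsRobust Nb r s) (i : Fin n) (k : ℕ)
    (hkr : k + 1 < r) (hks : k < s) (hkn : k + 1 < n)
    (hd : (Nb i).card + 1 ≤ r + k) : False := by
  obtain ⟨F, hFsub, hFcard⟩ :=
    Finset.exists_subset_card_eq (s := (Nb i) \ {i}) (n := min k ((Nb i \ {i}).card))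
      (min_le_right _ _)
  have hiF : i ∉ F := fun hiIn => by simpa using hFsub hiIn
  set V1 : Finset (Fin n) := insert i F with hV1
  set V2 : Finset (Fin n) := Finset.univ \ V1 with hV2
  have hcard1 : V1.card ≤ k + 1 := by
    rw [hV1, Finset.card_insert_of_notMem hiF, hFcard]; omega
  have hV1ne : V1.Nonempty := ⟨i, Finset.mem_insert_self i F⟩
  have hV2ne : V2.Nonempty := by
    rw [← Finset.card_pos, hV2, Finset.card_sdiff_of_subset (Finset.subset_univ _),
      Finset.card_univ, Fintype.card_fin]
    omega
  have hdisj : Disjoint V1 V2 := Finset.disjoint_sdiff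
  have hc : ((Nb i) \ {i}).card ≤ (Nb i).card := Finset.card_le_card Finset.sdiff_subset
  have hiNb : (Nb i \ V1).card + 1 ≤ r := by
    have heq : Nb i \ V1 = (Nb i \ {i}) \ F := by
      rw [hV1]; ext x; simp [Finset.mem_sdiff, Finset.mem_insert]; tauto
    rw [heq, Finset.card_sdiff_of_subset hFsub, hFcard]
    omega
  have hout : ∀ j : Fin n, Nb j \ V2 ⊆ V1 := by
    intro j x hx
    rw [hV2] at hx
    simp only [Finset.mem_sdiff, Finset.mem_univ, true_and, not_not] at hx
    tauto
  have hX2 : reachSet Nb r V2 = ∅ := by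
    rw [Finset.eq_empty_iff_forall_notMem]
    intro j hj
    rw [reachSet, Finset.mem_filter] at hj
    obtain ⟨-, hj2⟩ := hj
    have := Finset.card_le_card (hout j)
    omega
  have hX1sub : reachSet Nb r V1 ⊆ F := by
    intro x hx
    rw [reachSet, Finset.mem_filter] at hx
    obtain ⟨hx1, hx2⟩ := hx
    rcases Finset.mem_insert.mp hx1 with rfl | hxF
    · exact absurd hx2 (by omega)
    · exact hxF
  rcases h V1 V2 hV1ne hV2ne hdisj with h1 | h2 | h3
  · have hi : i ∈ reachSet Nb r V1 := by rw [h1]; exact Finset.mem_insert_self i F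
    rw [reachSet, Finset.mem_filter] at hi
    obtain ⟨-, hi2⟩ := hi
    omega
  · obtain ⟨j, hj⟩ := hV2ne
    have : j ∈ reachSet Nb r V2 := by rw [h2]; exact hj
    rw [hX2] at this
    simp at this
  · have h1c := Finset.card_le_card hX1sub
    rw [hX2] at h3
    simp only [Finset.card_empty, add_zero] at h3
    rw [hFcard] at h1c
    omega

/-- If `G` is `(r,s)`-robust with `r ≥ 1`, then the degree `d_i = |N_i|` of every
node `i` satisfies `d_i ≥ r + s - 1` if `s < r`, and `d_i ≥ 2r - 2` if `s ≥ r`. -/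
theorem robust_degree {n r s : ℕ} (Nb : Fin n → Finset (Fin n))
    (hr1 : 1 ≤ r) (hrn : r < n) (hs1 : 1 ≤ s) (hsn : s < n)
    (h : IsRobust Nb r s) (i : Fin n) :
    (s < r → r + s - 1 ≤ (Nb i).card) ∧ (r ≤ s → 2 * r - 2 ≤ (Nb i).card) := by
  constructor
  · intro hsr
    by_contra hlt
    push_neg at hlt
    exact robust_degree_aux Nb h i (s - 1) (by omega) (by omega) (by omega) (by omega)
  · intro hrs
    by_contra hlt
    push_neg at hlt
    exact robust_degree_aux Nb h i (r - 2) (by omega) (by omega) (by omega) (by omega)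
end

section
/- Let G be a directed graph on n nodes and let r ≥ 1, s ≥ 1 be integers with r+s−1 < n. If G is (r+s−1)-robust, then G is (r,s)-robust. -/
/-- Key step: a node of `V \ X^r_V` with at least `r+s-1` neighbors outside `V \ X^r_V`
forces `|X^r_V| ≥ s`. -/
lemma reachSet_card_of_witness {n : ℕ} (Nb : Fin n → Finset (Fin n)) {r s : ℕ}
    (hr1 : 1 ≤ r) {V : Finset (Fin n)} {i : Fin n}
    (hi : i ∈ V \ reachSet Nb r V)
    (hcard : r + s - 1 ≤ ((Nb i) \ (V \ reachSet Nb r V)).card) :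
    s ≤ (reachSet Nb r V).card := by
  rw [Finset.mem_sdiff] at hi
  obtain ⟨hiV, hiX⟩ := hi
  have h1 : ¬ r ≤ ((Nb i) \ V).card := by
    intro hle
    exact hiX (Finset.mem_filter.mpr ⟨hiV, hle⟩)
  have hsub : (Nb i) \ (V \ reachSet Nb r V) ⊆ ((Nb i) \ V) ∪ reachSet Nb r V := by
    intro x hx
    simp only [Finset.mem_sdiff, Finset.mem_union] at hx ⊢
    tauto
  have h2 := (Finset.card_le_card hsub).trans (Finset.card_union_le _ _)
  omega

/-- If `r ≥ 1`, `s ≥ 1`, `r + s - 1 < n`, and `G` is `(r+s-1)`-robust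
(i.e. `(r+s-1, 1)`-robust), then `G` is `(r,s)`-robust. -/
theorem robust_of_robust_sum {n r s : ℕ} (Nb : Fin n → Finset (Fin n))
    (hr1 : 1 ≤ r) (hs1 : 1 ≤ s) (hn : r + s - 1 < n)
    (h : IsRobust Nb (r + s - 1) 1) :
    IsRobust Nb r s := by
  intro V1 V2 h1 h2 hd
  by_cases e1 : reachSet Nb r V1 = V1
  · exact Or.inl e1
  by_cases e2 : reachSet Nb r V2 = V2
  · exact Or.inr (Or.inl e2)
  right; right
  have hX1 : reachSet Nb r V1 ⊆ V1 := Finset.filter_subset _ _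
  have hX2 : reachSet Nb r V2 ⊆ V2 := Finset.filter_subset _ _
  have hne1 : (V1 \ reachSet Nb r V1).Nonempty := by
    rw [Finset.sdiff_nonempty]
    intro hs
    exact e1 (Finset.Subset.antisymm hX1 hs)
  have hne2 : (V2 \ reachSet Nb r V2).Nonempty := by
    rw [Finset.sdiff_nonempty]
    intro hs
    exact e2 (Finset.Subset.antisymm hX2 hs)
  have hd' : Disjoint (V1 \ reachSet Nb r V1) (V2 \ reachSet Nb r V2) :=
    Finset.disjoint_of_subset_left (Finset.sdiff_subset)
      (Finset.disjoint_of_subset_right (Finset.sdiff_subset) hd)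
  -- In every case of (r+s-1)-robustness, some node of one of the reduced sets
  -- has ≥ r+s-1 neighbors outside that reduced set.
  have key : (∃ i ∈ V1 \ reachSet Nb r V1,
        r + s - 1 ≤ ((Nb i) \ (V1 \ reachSet Nb r V1)).card) ∨
      (∃ i ∈ V2 \ reachSet Nb r V2,
        r + s - 1 ≤ ((Nb i) \ (V2 \ reachSet Nb r V2)).card) := by
    rcases h (V1 \ reachSet Nb r V1) (V2 \ reachSet Nb r V2) hne1 hne2 hd' with hc | hc | hc
    · left
      obtain ⟨i, hi⟩ := hne1
      rw [← hc] at hi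
      rw [reachSet, Finset.mem_filter] at hi
      exact ⟨i, hi.1, hi.2⟩
    · right
      obtain ⟨i, hi⟩ := hne2
      rw [← hc] at hi
      rw [reachSet, Finset.mem_filter] at hi
      exact ⟨i, hi.1, hi.2⟩
    · rcases Nat.lt_or_ge 0 (reachSet Nb (r + s - 1) (V1 \ reachSet Nb r V1)).card with hp | hp
      · left
        obtain ⟨i, hi⟩ := Finset.card_pos.mp hp
        rw [reachSet, Finset.mem_filter] at hi
        exact ⟨i, hi.1, hi.2⟩
      · right
        have : 0 < (reachSet Nb (r + s - 1) (V2 \ reachSet Nb r V2)).card := by omega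
        obtain ⟨i, hi⟩ := Finset.card_pos.mp this
        rw [reachSet, Finset.mem_filter] at hi
        exact ⟨i, hi.1, hi.2⟩
  rcases key with ⟨i, hi, hci⟩ | ⟨i, hi, hci⟩
  · exact le_trans (reachSet_card_of_witness Nb hr1 hi hci) (Nat.le_add_right _ _)
  · exact le_trans (reachSet_card_of_witness Nb hr1 hi hci) (Nat.le_add_left _ _)
end

section
/- (Safety part of Theorem 1.) Under the F-total model, for every regular node i ∈ R executing Protocol 1 and every time k ∈ ℕ, both x_i(k) and x̂_i(k) lie in the interval S = [min_{j∈R} min(x_j(0), x̂_j(0)), max_{j∈R} max(x_j(0), x̂_j(0))], regardless of the behaviors of the malicious nodes and of the admissible weight choices. -/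
open Finset

/- A directed graph on `n` nodes is given by its neighbor sets:
`j ∈ Nb i` means `(j, i)` is an edge, i.e. node `j` can send information to node `i`.
The node set is partitioned into the set `R` of regular nodes and its complement,
the set of malicious nodes, whose cardinality is at most `F` (the `F`-total model).
Malicious nodes choose their states and broadcast values arbitrarily (they are
simply unconstrained below), but broadcast the same value to all neighbors. -/

/-- `MSRAbove Nbhd val xi F D`: `D` is an admissible set of removed "large" neighbors:
if fewer than `F` neighbors `j` have `val j > xi`, then exactly those are removed;
otherwise, `D` consists of `F` neighbors with values above `xi` which are largest among
those. -/
def MSRAbove {n : ℕ} (Nbhd : Finset (Fin n)) (val : Fin n → ℝ) (xi : ℝ) (F : ℕ)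
    (D : Finset (Fin n)) : Prop :=
  ((Nbhd.filter fun j => xi < val j).card < F ∧ D = Nbhd.filter fun j => xi < val j) ∨
  (F ≤ (Nbhd.filter fun j => xi < val j).card ∧
    D ⊆ (Nbhd.filter fun j => xi < val j) ∧ D.card = F ∧
    ∀ j ∈ D, ∀ l ∈ (Nbhd.filter fun j => xi < val j) \ D, val l ≤ val j)

/-- `MSRBelow Nbhd val xi F D`: `D` is an admissible set of removed "small" neighbors. -/
def MSRBelow {n : ℕ} (Nbhd : Finset (Fin n)) (val : Fin n → ℝ) (xi : ℝ) (F : ℕ)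
    (D : Finset (Fin n)) : Prop :=
  ((Nbhd.filter fun j => val j < xi).card < F ∧ D = Nbhd.filter fun j => val j < xi) ∨
  (F ≤ (Nbhd.filter fun j => val j < xi).card ∧
    D ⊆ (Nbhd.filter fun j => val j < xi) ∧ D.card = F ∧
    ∀ j ∈ D, ∀ l ∈ (Nbhd.filter fun j => val j < xi) \ D, val j ≤ val l)

/-- Protocol 1 (event-based MSR): every regular node `i ∈ R` filters its neighbors'
broadcast values relative to its own state `x k i`, updates
`x (k+1) i = x k i + Σ_{j ∈ M k i} a k i j * (x̂ k j - x k i)` with weights bounded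
below by `γ` (including the self-weight `1 - Σ a k i j`), and broadcasts the new state
exactly when `|x̂ k i - x (k+1) i| > c0 + c1·exp(-α k)`. Malicious nodes
(those outside `R`) are unconstrained. -/
def Protocol1 {n : ℕ} (F : ℕ) (Nb : Fin n → Finset (Fin n)) (R : Finset (Fin n))
    (γ c0 c1 α : ℝ) (x xhat : ℕ → Fin n → ℝ)
    (a : ℕ → Fin n → Fin n → ℝ) (M : ℕ → Fin n → Finset (Fin n)) : Prop :=
  ∀ k : ℕ, ∀ i ∈ R,
    (∃ Dmax Dmin : Finset (Fin n),
        MSRAbove (Nb i) (xhat k) (x k i) F Dmax ∧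
        MSRBelow (Nb i) (xhat k) (x k i) F Dmin ∧
        M k i = Nb i \ (Dmax ∪ Dmin)) ∧
    (∀ j ∈ M k i, γ ≤ a k i j) ∧
    γ ≤ 1 - ∑ j ∈ M k i, a k i j ∧
    x (k + 1) i = x k i + ∑ j ∈ M k i, a k i j * (xhat k j - x k i) ∧
    xhat (k + 1) i =
      if c0 + c1 * Real.exp (-α * (k : ℝ)) < |xhat k i - x (k + 1) i| then x (k + 1) i
      else xhat k i

/-- Safety part of Theorem 1: under the `F`-total model, for every regular node
`i ∈ R` executing Protocol 1 and every time `k`, both `x k i` and `x̂ k i` lie in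
the interval `S = [min_{j∈R} min(x_j(0), x̂_j(0)), max_{j∈R} max(x_j(0), x̂_j(0))]`,
for every behavior of the malicious nodes and all admissible weights. -/
theorem protocol1_safety {n F : ℕ} (Nb : Fin n → Finset (Fin n))
    (R : Finset (Fin n)) (hR : R.Nonempty) (hF : (Finset.univ \ R).card ≤ F)
    (γ c0 c1 α : ℝ) (hγ0 : 0 < γ) (hγ : γ ≤ 1 / 2)
    (hc0 : 0 ≤ c0) (hc1 : 0 ≤ c1) (hα : 0 < α)
    (x xhat : ℕ → Fin n → ℝ) (a : ℕ → Fin n → Fin n → ℝ)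
    (M : ℕ → Fin n → Finset (Fin n))
    (hP : Protocol1 F Nb R γ c0 c1 α x xhat a M) :
    ∀ i ∈ R, ∀ k : ℕ,
      ((R.inf' hR fun j => min (x 0 j) (xhat 0 j)) ≤ x k i ∧
        x k i ≤ R.sup' hR fun j => max (x 0 j) (xhat 0 j)) ∧
      ((R.inf' hR fun j => min (x 0 j) (xhat 0 j)) ≤ xhat k i ∧
        xhat k i ≤ R.sup' hR fun j => max (x 0 j) (xhat 0 j)) := by
  set m := R.inf' hR fun j => min (x 0 j) (xhat 0 j) with hm
  set Mx := R.sup' hR fun j => max (x 0 j) (xhat 0 j) with hMx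
  suffices h : ∀ k : ℕ, ∀ i ∈ R,
      (m ≤ x k i ∧ x k i ≤ Mx) ∧ (m ≤ xhat k i ∧ xhat k i ≤ Mx) by
    intro i hi k; exact h k i hi
  intro k
  induction k with
  | zero =>
    intro i hi
    refine ⟨⟨?_, ?_⟩, ?_, ?_⟩
    · exact le_trans (Finset.inf'_le _ hi) (min_le_left _ _)
    · exact le_trans (le_max_left _ _) (Finset.le_sup' (fun j => max (x 0 j) (xhat 0 j)) hi)
    · exact le_trans (Finset.inf'_le _ hi) (min_le_right _ _)
    · exact le_trans (le_max_right _ _) (Finset.le_sup' (fun j => max (x 0 j) (xhat 0 j)) hi)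
  | succ k ih =>
    intro i hi
    obtain ⟨⟨Dmax, Dmin, hA, hB, hMdef⟩, hw, hself, hx, hxhat⟩ := hP k i hi
    have hxm := (ih i hi).1
    have hub : ∀ j ∈ M k i, xhat k j ≤ Mx := by
      intro j hj
      by_cases hgt : x k i < xhat k j
      · rw [hMdef] at hj
        obtain ⟨hjN, hjD⟩ := Finset.mem_sdiff.mp hj
        have hjDmax : j ∉ Dmax := fun h => hjD (Finset.mem_union_left _ h)
        have hjf : j ∈ (Nb i).filter fun l => x k i < xhat k l :=
          Finset.mem_filter.mpr ⟨hjN, hgt⟩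
        rcases hA with ⟨_, hD⟩ | ⟨hcard, hsub, hDcard, hmaxl⟩
        · exact absurd (hD ▸ hjf) hjDmax
        · by_contra hMSlt
          push_neg at hMSlt
          have hBad : insert j Dmax ⊆ Finset.univ \ R := by
            intro l hl
            have hlx : Mx < xhat k l := by
              rcases Finset.mem_insert.mp hl with rfl | hl
              · exact hMSlt
              · exact lt_of_lt_of_le hMSlt
                  (hmaxl l hl j (Finset.mem_sdiff.mpr ⟨hjf, hjDmax⟩))
            simp only [Finset.mem_sdiff, Finset.mem_univ, true_and]
            intro hlR
            exact absurd ((ih l hlR).2.2) (not_le.mpr hlx)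
          have hc := Finset.card_le_card hBad
          rw [Finset.card_insert_of_notMem hjDmax, hDcard] at hc
          omega
      · push_neg at hgt
        exact le_trans hgt hxm.2
    have hlb : ∀ j ∈ M k i, m ≤ xhat k j := by
      intro j hj
      by_cases hlt : xhat k j < x k i
      · rw [hMdef] at hj
        obtain ⟨hjN, hjD⟩ := Finset.mem_sdiff.mp hj
        have hjDmin : j ∉ Dmin := fun h => hjD (Finset.mem_union_right _ h)
        have hjf : j ∈ (Nb i).filter fun l => xhat k l < x k i :=
          Finset.mem_filter.mpr ⟨hjN, hlt⟩
        rcases hB with ⟨_, hD⟩ | ⟨hcard, hsub, hDcard, hminl⟩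
        · exact absurd (hD ▸ hjf) hjDmin
        · by_contra hMSlt
          push_neg at hMSlt
          have hBad : insert j Dmin ⊆ Finset.univ \ R := by
            intro l hl
            have hlx : xhat k l < m := by
              rcases Finset.mem_insert.mp hl with rfl | hl
              · exact hMSlt
              · exact lt_of_le_of_lt
                  (hminl l hl j (Finset.mem_sdiff.mpr ⟨hjf, hjDmin⟩)) hMSlt
            simp only [Finset.mem_sdiff, Finset.mem_univ, true_and]
            intro hlR
            exact absurd ((ih l hlR).2.1) (not_le.mpr hlx)
          have hc := Finset.card_le_card hBad
          rw [Finset.card_insert_of_notMem hjDmin, hDcard] at hc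
          omega
      · push_neg at hlt
        exact le_trans hxm.1 hlt
    have hs0 : 0 ≤ ∑ j ∈ M k i, a k i j :=
      Finset.sum_nonneg fun j hj => le_trans hγ0.le (hw j hj)
    have hs1 : ∑ j ∈ M k i, a k i j ≤ 1 := by linarith
    have hxub : x (k + 1) i ≤ Mx := by
      rw [hx]
      have h1 : ∑ j ∈ M k i, a k i j * (xhat k j - x k i)
          ≤ ∑ j ∈ M k i, a k i j * (Mx - x k i) := by
        refine Finset.sum_le_sum fun j hj => ?_
        exact mul_le_mul_of_nonneg_left (by linarith [hub j hj])
          (le_trans hγ0.le (hw j hj))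
      rw [← Finset.sum_mul] at h1
      nlinarith [hxm.2]
    have hxlb : m ≤ x (k + 1) i := by
      rw [hx]
      have h1 : ∑ j ∈ M k i, a k i j * (m - x k i)
          ≤ ∑ j ∈ M k i, a k i j * (xhat k j - x k i) := by
        refine Finset.sum_le_sum fun j hj => ?_
        exact mul_le_mul_of_nonneg_left (by linarith [hlb j hj])
          (le_trans hγ0.le (hw j hj))
      rw [← Finset.sum_mul] at h1
      nlinarith [hxm.1]
    refine ⟨⟨hxlb, hxub⟩, ?_⟩
    rw [hxhat]
    split
    · exact ⟨hxlb, hxub⟩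
    · exact (ih i hi).2
end

section
/- (Sufficiency part of Theorem 1.) Suppose the directed graph G is (F+1,F+1)-robust, let N = |R| ≥ 1 be the number of regular nodes, let c ≥ 0, and suppose the triggering parameter satisfies c0 ≤ γ^N·c/(4N). Then under Protocol 1, for all regular nodes i,j ∈ R, for every behavior of the malicious nodes, all initial values, and all admissible weight choices, lim sup_{k→∞} |x_i(k) − x_j(k)| ≤ c. -/
open Finset

/-!
Let `T k` be the largest state or broadcast value of a regular node at time `k`, and `T' k` the
same for `-x`. Since at most `F` nodes are malicious, a value surviving a regular node's filter is
bounded by regular values, so each update is a convex combination, with weights at least `γ`, of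
values `≤ T k`. Hence `T` and `T'` decrease to limits `m`, `m'`, and `|x_i - x_j| ≤ T + T'`.
Suppose `m + m' > c` and wait until `T`, `T'` are within `δ` of their limits and the broadcast
errors are below `c0 + δ`. The regular nodes with `x_i > m - ε` and those with `x_i < -(m' - ε)`
form two disjoint nonempty families. A node outside a family stays outside it at the next,
slightly smaller margin, and by robustness some member of a family has `F + 1` neighbors outside
it, one of which survives its filter and pulls it out. After `#R` steps a family is empty, so `T`
or `T'` has dropped below its limit.
-/

open Topology

theorem msrBelow_iff_msrAbove_neg {n F : ℕ} {Nbhd D : Finset (Fin n)} {val : Fin n → ℝ}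
    {xi : ℝ} : MSRBelow Nbhd val xi F D ↔ MSRAbove Nbhd (-val) (-xi) F D := by
  simp only [MSRBelow, MSRAbove, Pi.neg_apply, neg_lt_neg_iff, neg_le_neg_iff]

/-- A neighbor above `B` that survives the filter would, together with the `F` removed values
(all at least as large), give `F + 1` nodes above `B`, none of them regular. -/
theorem MSRAbove.le_of_notMem {n F : ℕ} {Nbhd D R : Finset (Fin n)} {val : Fin n → ℝ}
    {xi B : ℝ} (hD : MSRAbove Nbhd val xi F D) (hF : #(univ \ R) ≤ F)
    (hB : ∀ i ∈ R, val i ≤ B) (hxi : xi ≤ B) {j : Fin n} (hj : j ∈ Nbhd) (hjD : j ∉ D) :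
    val j ≤ B := by
  by_contra! hjB
  have hjf : j ∈ Nbhd.filter (xi < val ·) := mem_filter.2 ⟨hj, hxi.trans_lt hjB⟩
  rcases hD with ⟨-, rfl⟩ | ⟨-, -, hcard, hmax⟩
  · exact hjD hjf
  have hsub : insert j D ⊆ univ \ R := by
    intro l hl
    refine mem_sdiff.2 ⟨mem_univ l, fun hlR => (hB l hlR).not_gt ?_⟩
    rcases mem_insert.1 hl with rfl | hlD
    · exact hjB
    · exact hjB.trans_le (hmax l hlD j (mem_sdiff.2 ⟨hjf, hjD⟩))
  have := card_le_card hsub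
  rw [card_insert_of_notMem hjD, hcard] at this
  omega

theorem exists_mem_sdiff_le_of_msr {n F : ℕ} {Nbhd Dmax Dmin S : Finset (Fin n)}
    {val : Fin n → ℝ} {xi b : ℝ} (hmax : MSRAbove Nbhd val xi F Dmax)
    (hmin : MSRBelow Nbhd val xi F Dmin) (hS : S ⊆ Nbhd) (hcard : F < #S)
    (hb : ∀ j ∈ S, val j ≤ b) :
    xi ≤ b ∨ ∃ j ∈ Nbhd \ (Dmax ∪ Dmin), val j ≤ b := by
  by_cases h : ∃ j ∈ S, xi ≤ val j
  · obtain ⟨j, hj, hxj⟩ := h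
    exact Or.inl (hxj.trans (hb j hj))
  push Not at h
  have hDmin : #Dmin ≤ F := by
    rcases hmin with ⟨hlt, rfl⟩ | ⟨-, -, hc, -⟩ <;> omega
  have hDmax : Dmax ⊆ Nbhd.filter (xi < val ·) := by
    rcases hmax with ⟨-, rfl⟩ | ⟨-, hsub, -⟩
    exacts [subset_rfl, hsub]
  obtain ⟨j, hjS, hjD⟩ := exists_mem_notMem_of_card_lt_card (hDmin.trans_lt hcard)
  refine Or.inr ⟨j, mem_sdiff.2 ⟨hS hjS, ?_⟩, hb j hjS⟩
  rw [mem_union]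
  rintro (hj | hj)
  · exact (h j hjS).not_gt (mem_filter.1 (hDmax hj)).2
  · exact hjD hj

theorem add_sum_mul_sub_le {ι : Type*} {s : Finset ι} {w v : ι → ℝ} {xi γ b B : ℝ}
    (hγ : 0 ≤ γ) (hw : ∀ j ∈ s, γ ≤ w j) (hself : γ ≤ 1 - ∑ j ∈ s, w j)
    (hv : ∀ j ∈ s, v j ≤ B) (hxi : xi ≤ B) (hb : xi ≤ b ∨ ∃ j ∈ s, v j ≤ b) :
    xi + ∑ j ∈ s, w j * (v j - xi) ≤ B - γ * (B - b) := by
  have hsplit : xi + ∑ j ∈ s, w j * (v j - xi) =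
      B - ((1 - ∑ j ∈ s, w j) * (B - xi) + ∑ j ∈ s, w j * (B - v j)) := by
    have h : ∀ j ∈ s, w j * (v j - xi) = w j * (B - xi) - w j * (B - v j) :=
      fun j _ => by ring
    rw [sum_congr rfl h, sum_sub_distrib, ← sum_mul]
    ring
  have hterm : ∀ j ∈ s, 0 ≤ w j * (B - v j) :=
    fun j hj => mul_nonneg (hγ.trans (hw j hj)) (sub_nonneg.2 (hv j hj))
  have hself' : γ * (B - xi) ≤ (1 - ∑ j ∈ s, w j) * (B - xi) :=
    mul_le_mul_of_nonneg_right hself (sub_nonneg.2 hxi)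
  have hγxi : 0 ≤ γ * (B - xi) := mul_nonneg hγ (sub_nonneg.2 hxi)
  rw [hsplit]
  rcases hb with hxb | ⟨j, hj, hvj⟩
  · have : γ * (B - b) ≤ γ * (B - xi) := by gcongr
    linarith [sum_nonneg hterm]
  · have : γ * (B - b) ≤ w j * (B - v j) := by
      calc γ * (B - b) ≤ γ * (B - v j) := by gcongr
        _ ≤ w j * (B - v j) := by gcongr; exacts [sub_nonneg.2 (hv j hj), hw j hj]
    linarith [single_le_sum hterm hj]

theorem IsRobust.exists_mem_reachSet {n F r : ℕ} {Nb : Fin n → Finset (Fin n)}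
    {R V1 V2 : Finset (Fin n)} (hRobust : IsRobust Nb r (F + 1)) (hF : #(univ \ R) ≤ F)
    (h1 : (V1 ∩ R).Nonempty) (h2 : (V2 ∩ R).Nonempty) (hdisj : Disjoint V1 V2) :
    ∃ i ∈ R, i ∈ reachSet Nb r V1 ∨ i ∈ reachSet Nb r V2 := by
  obtain ⟨i1, hi1⟩ := h1
  obtain ⟨i2, hi2⟩ := h2
  rw [mem_inter] at hi1 hi2
  rcases hRobust V1 V2 ⟨i1, hi1.1⟩ ⟨i2, hi2.1⟩ hdisj with h | h | h
  · exact ⟨i1, hi1.2, Or.inl (by rw [h]; exact hi1.1)⟩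
  · exact ⟨i2, hi2.2, Or.inr (by rw [h]; exact hi2.1)⟩
  have hdisjX : Disjoint (reachSet Nb r V1) (reachSet Nb r V2) :=
    hdisj.mono (filter_subset _ _) (filter_subset _ _)
  have hnot : ¬ reachSet Nb r V1 ∪ reachSet Nb r V2 ⊆ univ \ R := fun hsub => by
    have := card_le_card hsub
    rw [card_union_of_disjoint hdisjX] at this
    omega
  obtain ⟨i, hiX, hiR⟩ := not_subset.1 hnot
  exact ⟨i, by simpa using hiR, mem_union.1 hiX⟩

theorem add_le_of_succ_lt {f : ℕ → ℕ} {N : ℕ} (h : ∀ l < N, f (l + 1) < f l) :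
    f N + N ≤ f 0 := by
  induction N with
  | zero => simp
  | succ N ih =>
    have := ih fun l hl => h l (by omega)
    have := h N (by omega)
    omega

/-- The margins of the contraction argument: a step of the protocol may lose a factor `γ` and the
broadcast error `c0 + δ`, `2 * ε l ≤ D` keeps the two families disjoint, and the bound on `c0`
leaves room for `N` steps. -/
theorem exists_thresholds {γ c0 c D : ℝ} {N : ℕ} (hγ0 : 0 < γ) (hγ1 : γ ≤ 1) (hc0 : 0 ≤ c0)
    (hc : 0 ≤ c) (hN : 1 ≤ N) (hc0c : c0 ≤ γ ^ N * c / (4 * N)) (hD : c < D) :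
    ∃ δ > 0, ∃ ε : ℕ → ℝ, (∀ l, ε (l + 1) ≤ γ * (ε l - c0) - δ) ∧ (∀ l, 2 * ε l ≤ D) ∧
      ∀ l ≤ N, c0 + δ < ε l := by
  have hγN : 0 < γ ^ N := pow_pos hγ0 N
  have hN' : (1 : ℝ) ≤ N := by exact_mod_cast hN
  set δ := γ ^ N * (D - c) / (4 * (N + 1)) with hδdef
  have hδ : 0 < δ := div_pos (mul_pos hγN (by linarith)) (by positivity)
  refine ⟨δ, hδ, fun l => γ ^ l * D / 2 - l * (c0 + δ), fun l => ?_, fun l => ?_,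
    fun l hl => ?_⟩
  · have hl : (0 : ℝ) ≤ l * ((1 - γ) * (c0 + δ)) := by
      have : 0 ≤ 1 - γ := by linarith
      positivity
    have : γ * c0 ≤ c0 := mul_le_of_le_one_left hc0 hγ1
    push_cast
    rw [pow_succ]
    nlinarith
  · have : γ ^ l * D ≤ D := mul_le_of_le_one_left (by linarith) (pow_le_one₀ hγ0.le hγ1)
    have : 0 ≤ (l : ℝ) * (c0 + δ) := by positivity
    linarith
  · have hlN : (l : ℝ) ≤ N := by exact_mod_cast hl
    have hpow : γ ^ N * D ≤ γ ^ l * D :=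
      mul_le_mul_of_nonneg_right (pow_le_pow_of_le_one hγ0.le hγ1 hl) (by linarith)
    have hc0' : c0 * (4 * N) ≤ γ ^ N * c := (le_div_iff₀ (by positivity)).1 hc0c
    have hδN : δ * (4 * (N + 1)) = γ ^ N * (D - c) := by
      rw [hδdef]; field_simp
    have : (l : ℝ) * (c0 + δ) ≤ N * (c0 + δ) := by gcongr
    nlinarith

noncomputable def topVal {n : ℕ} (R : Finset (Fin n)) (hR : R.Nonempty)
    (x xhat : ℕ → Fin n → ℝ) (k : ℕ) : ℝ :=
  R.sup' hR fun i => max (x k i) (xhat k i)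

/-- The nodes that look larger than `θ`: regular nodes through their states, malicious nodes
through their broadcasts, the only values of theirs anybody sees. -/
noncomputable def exceedSet {n : ℕ} (R : Finset (Fin n)) (y yhat : Fin n → ℝ) (θ : ℝ) :
    Finset (Fin n) :=
  R.filter (θ < y ·) ∪ (univ \ R).filter (θ < yhat ·)

section

variable {n : ℕ} {R : Finset (Fin n)}

theorem max_le_topVal (hR : R.Nonempty) (x xhat : ℕ → Fin n → ℝ) {k : ℕ} {i : Fin n}
    (hi : i ∈ R) : max (x k i) (xhat k i) ≤ topVal R hR x xhat k :=
  le_sup' (fun i => max (x k i) (xhat k i)) hi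

theorem topVal_le_iff {hR : R.Nonempty} {x xhat : ℕ → Fin n → ℝ} {k : ℕ} {B : ℝ} :
    topVal R hR x xhat k ≤ B ↔ ∀ i ∈ R, max (x k i) (xhat k i) ≤ B :=
  sup'_le_iff hR _

theorem abs_sub_le_topVal_add (hR : R.Nonempty) (x xhat : ℕ → Fin n → ℝ) {k : ℕ}
    {i j : Fin n} (hi : i ∈ R) (hj : j ∈ R) :
    |x k i - x k j| ≤ topVal R hR x xhat k + topVal R hR (-x) (-xhat) k := by
  have h := fun l (hl : l ∈ R) =>
    (le_max_left _ _).trans (max_le_topVal hR x xhat (k := k) hl)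
  have h' := fun l (hl : l ∈ R) =>
    (le_max_left _ _).trans (max_le_topVal hR (-x) (-xhat) (k := k) hl)
  simp only [Pi.neg_apply] at h'
  rw [abs_sub_le_iff]
  constructor <;> linarith [h i hi, h j hj, h' i hi, h' j hj]

theorem filter_nonempty_of_lt_topVal {hR : R.Nonempty} {x xhat : ℕ → Fin n → ℝ} {k : ℕ}
    {θ η : ℝ} (hgap : ∀ i ∈ R, |xhat k i - x k i| ≤ η) (h : θ + η < topVal R hR x xhat k) :
    (R.filter (θ < x k ·)).Nonempty := by
  obtain ⟨i, hi, hlt⟩ := (lt_sup'_iff hR).1 h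
  have hgi := abs_le.1 (hgap i hi)
  refine ⟨i, mem_filter.2 ⟨hi, ?_⟩⟩
  rcases lt_max_iff.1 hlt with h | h <;> linarith

theorem mem_exceedSet_of_mem {y yhat : Fin n → ℝ} {θ : ℝ} {i : Fin n} (hi : i ∈ R) :
    i ∈ exceedSet R y yhat θ ↔ θ < y i := by
  simp [exceedSet, hi]

theorem mem_exceedSet_of_notMem {y yhat : Fin n → ℝ} {θ : ℝ} {i : Fin n} (hi : i ∉ R) :
    i ∈ exceedSet R y yhat θ ↔ θ < yhat i := by
  simp [exceedSet, hi]

theorem disjoint_exceedSet_neg {y yhat : Fin n → ℝ} {θ θ' : ℝ} (h : 0 ≤ θ + θ') :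
    Disjoint (exceedSet R y yhat θ) (exceedSet R (-y) (-yhat) θ') := by
  rw [disjoint_left]
  intro i h1 h2
  simp only [exceedSet, mem_union, mem_filter, mem_sdiff, mem_univ, true_and,
    Pi.neg_apply] at h1 h2
  rcases h1 with ⟨hR1, h1⟩ | ⟨hR1, h1⟩ <;> rcases h2 with ⟨hR2, h2⟩ | ⟨hR2, h2⟩
  all_goals first | linarith | contradiction

end

namespace Protocol1

variable {n F : ℕ} {Nb : Fin n → Finset (Fin n)} {R : Finset (Fin n)} {γ c0 c1 α : ℝ}
  {x xhat : ℕ → Fin n → ℝ} {a : ℕ → Fin n → Fin n → ℝ} {M : ℕ → Fin n → Finset (Fin n)}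

theorem neg (hP : Protocol1 F Nb R γ c0 c1 α x xhat a M) :
    Protocol1 F Nb R γ c0 c1 α (-x) (-xhat) a M := by
  intro k i hi
  obtain ⟨⟨Dmax, Dmin, hmax, hmin, hM⟩, hw, hself, hup, htrig⟩ := hP k i hi
  refine ⟨⟨Dmin, Dmax, msrBelow_iff_msrAbove_neg.1 hmin, ?_, by rw [hM, union_comm]⟩,
    hw, hself, ?_, ?_⟩
  · rw [msrBelow_iff_msrAbove_neg]
    simpa using hmax
  · simp only [Pi.neg_apply, hup, neg_add, ← sum_neg_distrib]
    congr 1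
    exact sum_congr rfl fun j _ => by ring
  · simp only [Pi.neg_apply, neg_sub_neg, abs_sub_comm (x (k + 1) i), htrig]
    split_ifs <;> rfl

theorem x_succ_le (hP : Protocol1 F Nb R γ c0 c1 α x xhat a M) (hF : #(univ \ R) ≤ F)
    (hγ : 0 ≤ γ) {k : ℕ} {i : Fin n} (hi : i ∈ R) {B b : ℝ}
    (hB : ∀ j ∈ R, max (x k j) (xhat k j) ≤ B)
    (hb : x k i ≤ b ∨ ∃ S ⊆ Nb i, F < #S ∧ ∀ j ∈ S, xhat k j ≤ b) :
    x (k + 1) i ≤ B - γ * (B - b) := by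
  obtain ⟨⟨Dmax, Dmin, hmax, hmin, hM⟩, hw, hself, hup, -⟩ := hP k i hi
  have hxi : x k i ≤ B := (le_max_left _ _).trans (hB i hi)
  rw [hup]
  refine add_sum_mul_sub_le hγ hw hself (fun j hj => ?_) hxi ?_
  · rw [hM, mem_sdiff, mem_union, not_or] at hj
    exact hmax.le_of_notMem hF (fun l hl => (le_max_right _ _).trans (hB l hl)) hxi hj.1
      hj.2.1
  · rw [hM]
    rcases hb with hb | ⟨S, hS, hcard, hSb⟩
    · exact Or.inl hb
    · exact exists_mem_sdiff_le_of_msr hmax hmin hS hcard hSb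

theorem topVal_succ_le (hP : Protocol1 F Nb R γ c0 c1 α x xhat a M) (hF : #(univ \ R) ≤ F)
    (hγ : 0 ≤ γ) (hR : R.Nonempty) (k : ℕ) :
    topVal R hR x xhat (k + 1) ≤ topVal R hR x xhat k := by
  have hB := topVal_le_iff.1 (le_refl (topVal R hR x xhat k))
  have hx : ∀ i ∈ R, x (k + 1) i ≤ topVal R hR x xhat k := fun i hi => by
    simpa using hP.x_succ_le hF hγ hi hB (Or.inl ((le_max_left _ _).trans (hB i hi)))
  refine topVal_le_iff.2 fun i hi => max_le (hx i hi) ?_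
  rw [(hP k i hi).2.2.2.2]
  split_ifs
  exacts [hx i hi, (le_max_right _ _).trans (hB i hi)]

theorem tendsto_topVal (hP : Protocol1 F Nb R γ c0 c1 α x xhat a M) (hF : #(univ \ R) ≤ F)
    (hγ : 0 ≤ γ) (hR : R.Nonempty) :
    Filter.Tendsto (topVal R hR x xhat) Filter.atTop (𝓝 (⨅ k, topVal R hR x xhat k)) := by
  have hanti' := antitone_nat_of_succ_le (hP.neg.topVal_succ_le hF hγ hR)
  obtain ⟨i, hi⟩ := id hR
  refine tendsto_atTop_ciInf (antitone_nat_of_succ_le (hP.topVal_succ_le hF hγ hR))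
    ⟨-topVal R hR (-x) (-xhat) 0, ?_⟩
  rintro _ ⟨k, rfl⟩
  have h0 := abs_sub_le_topVal_add hR x xhat (k := k) hi hi
  rw [sub_self, abs_zero] at h0
  linarith [hanti' (Nat.zero_le k)]

theorem eventually_abs_sub_le (hP : Protocol1 F Nb R γ c0 c1 α x xhat a M) (hc0 : 0 ≤ c0)
    (hα : 0 < α) {δ : ℝ} (hδ : 0 < δ) :
    ∀ᶠ k in Filter.atTop, ∀ i ∈ R, |xhat k i - x k i| ≤ c0 + δ := by
  have hexp : Filter.Tendsto (fun k : ℕ => c1 * Real.exp (-α * k)) Filter.atTop (𝓝 0) := by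
    simpa [neg_mul] using (Real.tendsto_exp_neg_atTop_nhds_zero.comp
      (tendsto_natCast_atTop_atTop.const_mul_atTop hα)).const_mul c1
  obtain ⟨k0, hk0⟩ := Filter.eventually_atTop.1 (hexp.eventually_le_const hδ)
  refine Filter.eventually_atTop.2 ⟨k0 + 1, fun k hk i hi => ?_⟩
  obtain ⟨m, rfl⟩ : ∃ m, k = m + 1 := ⟨k - 1, by omega⟩
  have hm := hk0 m (by omega)
  rw [(hP m i hi).2.2.2.2]
  split_ifs with h
  · rw [sub_self, abs_zero]
    linarith
  · linarith [not_lt.1 h]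

theorem x_succ_le_of_level (hP : Protocol1 F Nb R γ c0 c1 α x xhat a M)
    (hF : #(univ \ R) ≤ F) (hγ : 0 ≤ γ) {k : ℕ} {i : Fin n} (hi : i ∈ R) {θ η B : ℝ}
    (hB : ∀ j ∈ R, max (x k j) (xhat k j) ≤ B) (hgap : ∀ j ∈ R, |xhat k j - x k j| ≤ η)
    (h : x k i ≤ θ ∨ i ∈ reachSet Nb (F + 1) (exceedSet R (x k) (xhat k) θ)) :
    x (k + 1) i ≤ B - γ * (B - (θ + η)) := by
  refine hP.x_succ_le hF hγ hi hB ?_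
  rcases h with h | h
  · exact Or.inl (by linarith [(abs_nonneg _).trans (hgap i hi)])
  refine Or.inr ⟨Nb i \ exceedSet R (x k) (xhat k) θ, sdiff_subset, (mem_filter.1 h).2,
    fun j hj => ?_⟩
  have hjV := (mem_sdiff.1 hj).2
  by_cases hjR : j ∈ R
  · rw [mem_exceedSet_of_mem hjR, not_lt] at hjV
    linarith [(abs_le.1 (hgap j hjR)).2]
  · rw [mem_exceedSet_of_notMem hjR, not_lt] at hjV
    linarith [(abs_nonneg _).trans (hgap i hi)]

theorem filter_succ_subset (hP : Protocol1 F Nb R γ c0 c1 α x xhat a M)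
    (hF : #(univ \ R) ≤ F) (hγ : 0 ≤ γ) {k : ℕ} {θ θ₁ η B : ℝ}
    (hB : ∀ j ∈ R, max (x k j) (xhat k j) ≤ B) (hgap : ∀ j ∈ R, |xhat k j - x k j| ≤ η)
    (hθ₁ : B - γ * (B - (θ + η)) ≤ θ₁) :
    R.filter (θ₁ < x (k + 1) ·) ⊆
      (R.filter (θ < x k ·)).filter
        (· ∉ reachSet Nb (F + 1) (exceedSet R (x k) (xhat k) θ)) := by
  intro i hi
  rw [mem_filter] at hi
  have h := fun hlevel => (hP.x_succ_le_of_level hF hγ hi.1 hB hgap hlevel).trans hθ₁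
  simp only [mem_filter]
  refine ⟨⟨hi.1, ?_⟩, fun hreach => (h (Or.inr hreach)).not_gt hi.2⟩
  by_contra! hle
  exact (h (Or.inl hle)).not_gt hi.2

theorem card_filter_succ_add_lt (hP : Protocol1 F Nb R γ c0 c1 α x xhat a M)
    (hF : #(univ \ R) ≤ F) (hRobust : IsRobust Nb (F + 1) (F + 1)) (hγ : 0 ≤ γ) {k : ℕ}
    {θ θ' θ₁ θ₁' η B B' : ℝ} (hB : ∀ j ∈ R, max (x k j) (xhat k j) ≤ B)
    (hB' : ∀ j ∈ R, max (-x k j) (-xhat k j) ≤ B') (hgap : ∀ j ∈ R, |xhat k j - x k j| ≤ η)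
    (hθ : 0 ≤ θ + θ') (hθ₁ : B - γ * (B - (θ + η)) ≤ θ₁)
    (hθ₁' : B' - γ * (B' - (θ' + η)) ≤ θ₁')
    (hne : (R.filter (θ < x k ·)).Nonempty) (hne' : (R.filter (θ' < -x k ·)).Nonempty) :
    #(R.filter (θ₁ < x (k + 1) ·)) + #(R.filter (θ₁' < -x (k + 1) ·)) <
      #(R.filter (θ < x k ·)) + #(R.filter (θ' < -x k ·)) := by
  have hgap' : ∀ j ∈ R, |(-xhat) k j - (-x) k j| ≤ η := fun j hj => by
    simpa only [Pi.neg_apply, neg_sub_neg, abs_sub_comm] using hgap j hj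
  have hsub := hP.filter_succ_subset hF hγ hB hgap hθ₁
  have hsub' := hP.neg.filter_succ_subset hF hγ hB' hgap' hθ₁'
  have hV : ∀ {y yhat : Fin n → ℝ} {θ : ℝ}, (R.filter (θ < y ·)).Nonempty →
      (exceedSet R y yhat θ ∩ R).Nonempty := fun ⟨i, hi⟩ =>
    ⟨i, mem_inter.2 ⟨mem_union_left _ hi, (mem_filter.1 hi).1⟩⟩
  obtain ⟨i, hi, hreach⟩ := hRobust.exists_mem_reachSet hF (hV hne) (hV hne')
    (disjoint_exceedSet_neg hθ)
  have hlt : ∀ {y yhat : Fin n → ℝ} {θ : ℝ}, i ∈ reachSet Nb (F + 1) (exceedSet R y yhat θ) →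
      (R.filter (θ < y ·)).filter (· ∉ reachSet Nb (F + 1) (exceedSet R y yhat θ)) ⊂
        R.filter (θ < y ·) := fun h =>
    filter_ssubset.2 ⟨i, mem_filter.2 ⟨hi, (mem_exceedSet_of_mem hi).1 (mem_filter.1 h).1⟩,
      not_not.2 h⟩
  rcases hreach with h | h
  · exact add_lt_add_of_lt_of_le (card_lt_card (hsub.trans_ssubset (hlt h)))
      (card_le_card (hsub'.trans (filter_subset _ _)))
  · exact add_lt_add_of_le_of_lt (card_le_card (hsub.trans (filter_subset _ _)))
      (card_lt_card (hsub'.trans_ssubset (hlt h)))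

/-- Otherwise the regular nodes above `θ l` and those below `-θ' l` would form two nonempty
disjoint families, and robustness would remove a node from one of them at every step:
more than `#R` removals in `#R` steps. -/
theorem exists_topVal_le (hP : Protocol1 F Nb R γ c0 c1 α x xhat a M) (hF : #(univ \ R) ≤ F)
    (hRobust : IsRobust Nb (F + 1) (F + 1)) (hγ : 0 ≤ γ) (hR : R.Nonempty) {K : ℕ}
    {θ θ' : ℕ → ℝ} {η B B' : ℝ} (hB : ∀ k ≥ K, topVal R hR x xhat k ≤ B)
    (hB' : ∀ k ≥ K, topVal R hR (-x) (-xhat) k ≤ B')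
    (hgap : ∀ k ≥ K, ∀ i ∈ R, |xhat k i - x k i| ≤ η) (hθ : ∀ l, 0 ≤ θ l + θ' l)
    (hθsucc : ∀ l, B - γ * (B - (θ l + η)) ≤ θ (l + 1))
    (hθsucc' : ∀ l, B' - γ * (B' - (θ' l + η)) ≤ θ' (l + 1)) :
    ∃ l ≤ #R, topVal R hR x xhat (K + l) ≤ θ l + η ∨
      topVal R hR (-x) (-xhat) (K + l) ≤ θ' l + η := by
  by_contra! hbig
  have hgap' : ∀ k ≥ K, ∀ i ∈ R, |(-xhat) k i - (-x) k i| ≤ η := fun k hk i hi => by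
    simpa only [Pi.neg_apply, neg_sub_neg, abs_sub_comm] using hgap k hk i hi
  have hne : ∀ l ≤ #R, (R.filter (θ l < x (K + l) ·)).Nonempty := fun l hl =>
    filter_nonempty_of_lt_topVal (hgap _ (by omega)) (hbig l hl).1
  have hne' : ∀ l ≤ #R, (R.filter (θ' l < -x (K + l) ·)).Nonempty := fun l hl =>
    filter_nonempty_of_lt_topVal (hgap' _ (by omega)) (hbig l hl).2
  set f : ℕ → ℕ := fun l =>
    #(R.filter (θ l < x (K + l) ·)) + #(R.filter (θ' l < -x (K + l) ·))
  have hK : ∀ l, K ≤ K + l := Nat.le_add_right K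
  have hdec : ∀ l < #R, f (l + 1) < f l := fun l hl =>
    hP.card_filter_succ_add_lt hF hRobust hγ (topVal_le_iff.1 (hB _ (hK l)))
      (topVal_le_iff.1 (hB' _ (hK l))) (hgap _ (hK l)) (hθ l) (hθsucc l) (hθsucc' l)
      (hne l hl.le) (hne' l hl.le)
  have h0 : f 0 ≤ #R := by
    show #(R.filter (θ 0 < x (K + 0) ·)) + #(R.filter (θ' 0 < -x (K + 0) ·)) ≤ #R
    rw [← card_union_of_disjoint]
    · exact card_le_card (union_subset (filter_subset _ _) (filter_subset _ _))
    · exact disjoint_filter.2 fun i _ h1 h2 => by linarith [hθ 0]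
  have hpos : 0 < f #R := (hne #R le_rfl).card_pos.trans_le (Nat.le_add_right _ _)
  have := add_le_of_succ_lt hdec
  omega

theorem iInf_topVal_add_le {N : ℕ} {c : ℝ} (hP : Protocol1 F Nb R γ c0 c1 α x xhat a M)
    (hF : #(univ \ R) ≤ F) (hRobust : IsRobust Nb (F + 1) (F + 1)) (hN : #R = N)
    (hN1 : 1 ≤ N) (hγ0 : 0 < γ) (hγ1 : γ ≤ 1) (hc0 : 0 ≤ c0) (hα : 0 < α) (hc : 0 ≤ c)
    (hc0c : c0 ≤ γ ^ N * c / (4 * N)) (hR : R.Nonempty) :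
    (⨅ k, topVal R hR x xhat k) + (⨅ k, topVal R hR (-x) (-xhat) k) ≤ c := by
  set m := ⨅ k, topVal R hR x xhat k
  set m' := ⨅ k, topVal R hR (-x) (-xhat) k
  have hT := hP.tendsto_topVal hF hγ0.le hR
  have hT' := hP.neg.tendsto_topVal hF hγ0.le hR
  by_contra! hlt
  obtain ⟨δ, hδ, ε, hεsucc, hεle, hεgt⟩ := exists_thresholds hγ0 hγ1 hc0 hc hN1 hc0c hlt
  obtain ⟨K, hK⟩ := Filter.eventually_atTop.1
    (((hT.eventually_le_const (lt_add_of_pos_right m hδ)).and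
      (hT'.eventually_le_const (lt_add_of_pos_right m' hδ))).and
      (hP.eventually_abs_sub_le hc0 hα hδ))
  obtain ⟨l, hl, h⟩ := hP.exists_topVal_le hF hRobust hγ0.le hR (θ := fun l => m - ε l)
    (θ' := fun l => m' - ε l) (fun k hk => (hK k hk).1.1) (fun k hk => (hK k hk).1.2)
    (fun k hk => (hK k hk).2) (fun l => by linarith [hεle l])
    (fun l => by linarith [hεsucc l]) (fun l => by linarith [hεsucc l])
  have := hεgt l (hN ▸ hl)
  have hm := (antitone_nat_of_succ_le (hP.topVal_succ_le hF hγ0.le hR)).le_of_tendsto hT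
  have hm' := (antitone_nat_of_succ_le (hP.neg.topVal_succ_le hF hγ0.le hR)).le_of_tendsto hT'
  rcases h with h | h
  · linarith [hm (K + l)]
  · linarith [hm' (K + l)]

end Protocol1

theorem protocol1_sufficiency_general {n F N : ℕ} (Nb : Fin n → Finset (Fin n))
    (R : Finset (Fin n)) (hF : (Finset.univ \ R).card ≤ F)
    (hRobust : IsRobust Nb (F + 1) (F + 1))
    (hN : R.card = N) (hN1 : 1 ≤ N)
    (γ c0 c1 α c : ℝ) (hγ0 : 0 < γ) (hγ : γ ≤ 1 / 2)
    (hc0 : 0 ≤ c0) (hα : 0 < α) (hc : 0 ≤ c)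
    (hc0c : c0 ≤ γ ^ N * c / (4 * N))
    (x xhat : ℕ → Fin n → ℝ) (a : ℕ → Fin n → Fin n → ℝ)
    (M : ℕ → Fin n → Finset (Fin n))
    (hP : Protocol1 F Nb R γ c0 c1 α x xhat a M) :
    ∀ i ∈ R, ∀ j ∈ R,
      Filter.limsup (fun k => |x k i - x k j|) Filter.atTop ≤ c := by
  have hR : R.Nonempty := card_pos.1 (by omega)
  have hT := (hP.tendsto_topVal hF hγ0.le hR).add (hP.neg.tendsto_topVal hF hγ0.le hR)
  intro i hi j hj
  calc Filter.limsup (fun k => |x k i - x k j|) Filter.atTop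
      ≤ Filter.limsup (fun k => topVal R hR x xhat k + topVal R hR (-x) (-xhat) k)
          Filter.atTop :=
        Filter.limsup_le_limsup
          (Filter.Eventually.of_forall fun k => abs_sub_le_topVal_add hR x xhat hi hj)
          (Filter.isBoundedUnder_of ⟨0, fun k => abs_nonneg _⟩).isCoboundedUnder_le
          hT.isBoundedUnder_le
    _ = _ := hT.limsup_eq
    _ ≤ c := hP.iInf_topVal_add_le hF hRobust hN hN1 hγ0 (by linarith) hc0 hα hc hc0c hR

/-- Sufficiency part of Theorem 1: if the graph is `(F+1,F+1)`-robust, `N = |R| ≥ 1`,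
`c ≥ 0`, and the triggering parameter satisfies `c0 ≤ γ^N·c/(4N)`, then under
Protocol 1 all regular nodes reach resilient consensus at error level `c`:
`limsup_{k→∞} |x_i(k) - x_j(k)| ≤ c` for all `i, j ∈ R`, regardless of the malicious
behaviors, initial values, and admissible weight choices. -/
theorem protocol1_sufficiency {n F N : ℕ} (Nb : Fin n → Finset (Fin n))
    (R : Finset (Fin n)) (hF : (Finset.univ \ R).card ≤ F)
    (hRobust : IsRobust Nb (F + 1) (F + 1))
    (hN : R.card = N) (hN1 : 1 ≤ N)
    (γ c0 c1 α c : ℝ) (hγ0 : 0 < γ) (hγ : γ ≤ 1 / 2)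
    (hc0 : 0 ≤ c0) (hc1 : 0 ≤ c1) (hα : 0 < α) (hc : 0 ≤ c)
    (hc0c : c0 ≤ γ ^ N * c / (4 * N))
    (x xhat : ℕ → Fin n → ℝ) (a : ℕ → Fin n → Fin n → ℝ)
    (M : ℕ → Fin n → Finset (Fin n))
    (hP : Protocol1 F Nb R γ c0 c1 α x xhat a M) :
    ∀ i ∈ R, ∀ j ∈ R,
      Filter.limsup (fun k => |x k i - x k j|) Filter.atTop ≤ c :=
  protocol1_sufficiency_general Nb R hF hRobust hN hN1 γ c0 c1 α c hγ0 hγ hc0 hα hc hc0c x xhat a M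
    hP
end

section
/- (Monotone bound used in the proof of Theorem 1.) Under Protocol 1 with the F-total model, for every time k ≥ 1 and every regular node i ∈ R, x_i(k+1) ≤ max_{j∈R} x_j(k) + c0 + c1·e^{−α(k−1)}; symmetrically, x_i(k+1) ≥ min_{j∈R} x_j(k) − c0 − c1·e^{−α(k−1)}. -/
open Finset

/-- Monotone bound used in the proof of Theorem 1: under Protocol 1 with the
`F`-total model, for every `k ≥ 1` and regular node `i ∈ R`,
`x_i(k+1) ≤ max_{j∈R} x_j(k) + c0 + c1·e^{-α(k-1)}` and symmetrically
`x_i(k+1) ≥ min_{j∈R} x_j(k) - c0 - c1·e^{-α(k-1)}`. -/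
theorem protocol1_monotone_bound {n F : ℕ} (Nb : Fin n → Finset (Fin n))
    (R : Finset (Fin n)) (hR : R.Nonempty) (hF : (Finset.univ \ R).card ≤ F)
    (γ c0 c1 α : ℝ) (hγ0 : 0 < γ) (hγ : γ ≤ 1 / 2)
    (hc0 : 0 ≤ c0) (hc1 : 0 ≤ c1) (hα : 0 < α)
    (x xhat : ℕ → Fin n → ℝ) (a : ℕ → Fin n → Fin n → ℝ)
    (M : ℕ → Fin n → Finset (Fin n))
    (hP : Protocol1 F Nb R γ c0 c1 α x xhat a M) :
    ∀ k : ℕ, 1 ≤ k → ∀ i ∈ R,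
      x (k + 1) i ≤ R.sup' hR (x k) + c0 + c1 * Real.exp (-α * ((k : ℝ) - 1)) ∧
      R.inf' hR (x k) - c0 - c1 * Real.exp (-α * ((k : ℝ) - 1)) ≤ x (k + 1) i := by
  intro k hk i hi
  obtain ⟨m, rfl⟩ : ∃ m, k = m + 1 := ⟨k - 1, (Nat.succ_pred_eq_of_pos hk).symm⟩
  set ε : ℝ := c0 + c1 * Real.exp (-α * (m : ℝ)) with hε
  have hεnn : 0 ≤ ε := by
    have := (Real.exp_pos (-α * (m : ℝ))).le
    rw [hε]; positivity
  set B : ℝ := R.sup' hR (x (m + 1)) with hB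
  set b : ℝ := R.inf' hR (x (m + 1)) with hb
  -- bound on broadcast values of regular nodes at time m+1
  have hreg : ∀ j ∈ R, xhat (m + 1) j ≤ B + ε ∧ b - ε ≤ xhat (m + 1) j := by
    intro j hj
    obtain ⟨-, -, -, -, hx⟩ := hP m j hj
    have hjB : x (m + 1) j ≤ B := le_sup' _ hj
    have hjb : b ≤ x (m + 1) j := inf'_le _ hj
    rw [hx]
    split_ifs with h
    · constructor <;> linarith
    · push_neg at h
      rw [← hε] at h
      obtain ⟨h1, h2⟩ := abs_le.mp h
      constructor <;> linarith
  obtain ⟨⟨Dmax, Dmin, hAbove, hBelow, hM⟩, hw, hs, hupd, -⟩ := hP (m + 1) i hi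
  have hiB : x (m + 1) i ≤ B := le_sup' _ hi
  have hib : b ≤ x (m + 1) i := inf'_le _ hi
  -- bound on all values used in the update
  have hval : ∀ j ∈ M (m + 1) i, xhat (m + 1) j ≤ B + ε ∧ b - ε ≤ xhat (m + 1) j := by
    intro j hj
    by_cases hjR : j ∈ R
    · exact hreg j hjR
    · rw [hM, mem_sdiff, mem_union] at hj
      obtain ⟨hjNb, hjD⟩ := hj
      push_neg at hjD
      constructor
      · by_cases hgt : x (m + 1) i < xhat (m + 1) j
        · have hjf : j ∈ (Nb i).filter (fun l => x (m + 1) i < xhat (m + 1) l) :=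
            mem_filter.mpr ⟨hjNb, hgt⟩
          rcases hAbove with ⟨hcard, hD⟩ | ⟨hcard, hsub, hDcard, hmax⟩
          · exact absurd (hD ▸ hjf) hjD.1
          · have hex : ∃ d ∈ Dmax, d ∈ R := by
              by_contra hcon
              push_neg at hcon
              have hins : insert j Dmax ⊆ Finset.univ \ R :=
                insert_subset (mem_sdiff.mpr ⟨mem_univ _, hjR⟩)
                  (fun d hd => mem_sdiff.mpr ⟨mem_univ _, hcon d hd⟩)
              have hle := card_le_card hins
              rw [card_insert_of_notMem hjD.1, hDcard] at hle
              omega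
            obtain ⟨d, hd, hdR⟩ := hex
            exact (hmax d hd j (mem_sdiff.mpr ⟨hjf, hjD.1⟩)).trans (hreg d hdR).1
        · push_neg at hgt; linarith
      · by_cases hlt : xhat (m + 1) j < x (m + 1) i
        · have hjf : j ∈ (Nb i).filter (fun l => xhat (m + 1) l < x (m + 1) i) :=
            mem_filter.mpr ⟨hjNb, hlt⟩
          rcases hBelow with ⟨hcard, hD⟩ | ⟨hcard, hsub, hDcard, hmin⟩
          · exact absurd (hD ▸ hjf) hjD.2
          · have hex : ∃ d ∈ Dmin, d ∈ R := by
              by_contra hcon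
              push_neg at hcon
              have hins : insert j Dmin ⊆ Finset.univ \ R :=
                insert_subset (mem_sdiff.mpr ⟨mem_univ _, hjR⟩)
                  (fun d hd => mem_sdiff.mpr ⟨mem_univ _, hcon d hd⟩)
              have hle := card_le_card hins
              rw [card_insert_of_notMem hjD.2, hDcard] at hle
              omega
            obtain ⟨d, hd, hdR⟩ := hex
            exact le_trans (hreg d hdR).2 (hmin d hd j (mem_sdiff.mpr ⟨hjf, hjD.2⟩))
        · push_neg at hlt; linarith
  have hwnn : ∀ j ∈ M (m + 1) i, (0 : ℝ) ≤ a (m + 1) i j :=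
    fun j hj => le_trans hγ0.le (hw j hj)
  set s : ℝ := ∑ j ∈ M (m + 1) i, a (m + 1) i j with hsdef
  have hs1 : s ≤ 1 - γ := by linarith
  have hsnn : 0 ≤ s := sum_nonneg hwnn
  have hup : x (m + 1 + 1) i ≤ B + ε := by
    have h1 : ∑ j ∈ M (m + 1) i, a (m + 1) i j * (xhat (m + 1) j - x (m + 1) i)
        ≤ ∑ j ∈ M (m + 1) i, a (m + 1) i j * ((B + ε) - x (m + 1) i) :=
      sum_le_sum fun j hj =>
        mul_le_mul_of_nonneg_left (by linarith [(hval j hj).1]) (hwnn j hj)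
    have h2 : ∑ j ∈ M (m + 1) i, a (m + 1) i j * ((B + ε) - x (m + 1) i)
        = s * ((B + ε) - x (m + 1) i) := by
      rw [hsdef, sum_mul]
    nlinarith [mul_nonneg (by linarith : (0:ℝ) ≤ 1 - s)
      (by linarith : (0:ℝ) ≤ (B + ε) - x (m + 1) i)]
  have hdown : b - ε ≤ x (m + 1 + 1) i := by
    have h1 : ∑ j ∈ M (m + 1) i, a (m + 1) i j * ((b - ε) - x (m + 1) i)
        ≤ ∑ j ∈ M (m + 1) i, a (m + 1) i j * (xhat (m + 1) j - x (m + 1) i) :=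
      sum_le_sum fun j hj =>
        mul_le_mul_of_nonneg_left (by linarith [(hval j hj).2]) (hwnn j hj)
    have h2 : ∑ j ∈ M (m + 1) i, a (m + 1) i j * ((b - ε) - x (m + 1) i)
        = s * ((b - ε) - x (m + 1) i) := by
      rw [hsdef, sum_mul]
    nlinarith [mul_nonneg (by linarith : (0:ℝ) ≤ 1 - s)
      (by linarith : (0:ℝ) ≤ x (m + 1) i - (b - ε))]
  have hcast : -α * ((↑(m + 1) : ℝ) - 1) = -α * (m : ℝ) := by push_cast; ring
  rw [hcast]
  constructor <;> [linarith [hup]; linarith [hdown]]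
end

section
/- (Safety part of Theorem 2.) Under the F-total model, for every regular node i ∈ R executing Protocol 2 and every time k ∈ ℕ, both x_i(k) and x̂_i(k) lie in the interval S = [min_{j∈R} min(x_j(0), x̂_j(0)), max_{j∈R} max(x_j(0), x̂_j(0))], regardless of the behaviors of the malicious nodes and of the admissible weight choices. In particular, max_{j∈R} x̂_j(k) is nonincreasing and min_{j∈R} x̂_j(k) is nondecreasing in k. -/
open Finset

/-- Protocol 2 (event-based MSR): every regular node `i ∈ R` filters its neighbors'
broadcast values relative to its own broadcast value `x̂ k i`, updates
`x (k+1) i = x̂ k i + Σ_{j ∈ M k i} a k i j * (x̂ k j - x̂ k i)` with weights bounded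
below by `γ` (including the self-weight `1 - Σ a k i j`), and broadcasts the new state
exactly when `|x̂ k i - x (k+1) i| > c0 + c1·exp(-α k)`. Malicious nodes
(those outside `R`) are unconstrained. -/
def Protocol2 {n : ℕ} (F : ℕ) (Nb : Fin n → Finset (Fin n)) (R : Finset (Fin n))
    (γ c0 c1 α : ℝ) (x xhat : ℕ → Fin n → ℝ)
    (a : ℕ → Fin n → Fin n → ℝ) (M : ℕ → Fin n → Finset (Fin n)) : Prop :=
  ∀ k : ℕ, ∀ i ∈ R,
    (∃ Dmax Dmin : Finset (Fin n),
        MSRAbove (Nb i) (xhat k) (xhat k i) F Dmax ∧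
        MSRBelow (Nb i) (xhat k) (xhat k i) F Dmin ∧
        M k i = Nb i \ (Dmax ∪ Dmin)) ∧
    (∀ j ∈ M k i, γ ≤ a k i j) ∧
    γ ≤ 1 - ∑ j ∈ M k i, a k i j ∧
    x (k + 1) i = xhat k i + ∑ j ∈ M k i, a k i j * (xhat k j - xhat k i) ∧
    xhat (k + 1) i =
      if c0 + c1 * Real.exp (-α * (k : ℝ)) < |xhat k i - x (k + 1) i| then x (k + 1) i
      else xhat k i

/-- Safety part of Theorem 2: under the `F`-total model, for every regular node
`i ∈ R` executing Protocol 2 and every time `k`, both `x k i` and `x̂ k i` lie in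
the interval `S = [min_{j∈R} min(x_j(0), x̂_j(0)), max_{j∈R} max(x_j(0), x̂_j(0))]`,
for every behavior of the malicious nodes and all admissible weights. In particular,
`max_{j∈R} x̂_j(k)` is nonincreasing and `min_{j∈R} x̂_j(k)` is nondecreasing in `k`. -/
theorem protocol2_safety {n F : ℕ} (Nb : Fin n → Finset (Fin n))
    (R : Finset (Fin n)) (hR : R.Nonempty) (hF : (Finset.univ \ R).card ≤ F)
    (γ c0 c1 α : ℝ) (hγ0 : 0 < γ) (hγ : γ ≤ 1 / 2)
    (hc0 : 0 ≤ c0) (hc1 : 0 ≤ c1) (hα : 0 < α)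
    (x xhat : ℕ → Fin n → ℝ) (a : ℕ → Fin n → Fin n → ℝ)
    (M : ℕ → Fin n → Finset (Fin n))
    (hP : Protocol2 F Nb R γ c0 c1 α x xhat a M) :
    (∀ i ∈ R, ∀ k : ℕ,
      ((R.inf' hR fun j => min (x 0 j) (xhat 0 j)) ≤ x k i ∧
        x k i ≤ R.sup' hR fun j => max (x 0 j) (xhat 0 j)) ∧
      ((R.inf' hR fun j => min (x 0 j) (xhat 0 j)) ≤ xhat k i ∧
        xhat k i ≤ R.sup' hR fun j => max (x 0 j) (xhat 0 j))) ∧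
    Antitone (fun k => R.sup' hR (xhat k)) ∧
    Monotone (fun k => R.inf' hR (xhat k)) := by
  classical
  set sR : ℕ → ℝ := fun k => R.sup' hR (xhat k) with hsRdef
  set iR : ℕ → ℝ := fun k => R.inf' hR (xhat k) with hiRdef
  have hcardF : ∀ (S : Finset (Fin n)), (∀ l ∈ S, l ∉ R) → S.card ≤ F := by
    intro S hS
    calc S.card ≤ (Finset.univ \ R).card := by
          apply Finset.card_le_card
          intro l hl
          simp only [Finset.mem_sdiff, Finset.mem_univ, true_and]
          exact hS l hl
      _ ≤ F := hF
  -- key step bounds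
  have hstep : ∀ k : ℕ, ∀ i ∈ R, iR k ≤ x (k + 1) i ∧ x (k + 1) i ≤ sR k := by
    intro k i hi
    obtain ⟨⟨Dmax, Dmin, hA, hB, hM⟩, hw, hself, hx, _⟩ := hP k i hi
    have hxiU : xhat k i ≤ sR k := Finset.le_sup' _ hi
    have hxiL : iR k ≤ xhat k i := Finset.inf'_le _ hi
    have hup : ∀ j ∈ M k i, xhat k j ≤ sR k := by
      intro j hj
      by_contra hcon
      push_neg at hcon
      have hij : xhat k i < xhat k j := lt_of_le_of_lt hxiU hcon
      rw [hM, Finset.mem_sdiff, Finset.mem_union] at hj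
      obtain ⟨hjNb, hjD⟩ := hj
      push_neg at hjD
      have hjfil : j ∈ (Nb i).filter fun l => xhat k i < xhat k l :=
        Finset.mem_filter.mpr ⟨hjNb, hij⟩
      rcases hA with ⟨_, hD⟩ | ⟨_, hsub, hcard, hlg⟩
      · exact hjD.1 (hD ▸ hjfil)
      · have hbig : ∀ l ∈ Dmax, sR k < xhat k l := by
          intro l hl
          exact lt_of_lt_of_le hcon
            (hlg l hl j (Finset.mem_sdiff.mpr ⟨hjfil, hjD.1⟩))
        have hnotR : ∀ l ∈ insert j Dmax, l ∉ R := by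
          intro l hl hlR
          rcases Finset.mem_insert.mp hl with rfl | hl'
          · exact absurd (Finset.le_sup' (xhat k) hlR) (not_le.mpr hcon)
          · exact absurd (Finset.le_sup' (xhat k) hlR) (not_le.mpr (hbig l hl'))
        have := hcardF _ hnotR
        rw [Finset.card_insert_of_notMem hjD.1, hcard] at this
        omega
    have hdn : ∀ j ∈ M k i, iR k ≤ xhat k j := by
      intro j hj
      by_contra hcon
      push_neg at hcon
      have hij : xhat k j < xhat k i := lt_of_lt_of_le hcon hxiL
      rw [hM, Finset.mem_sdiff, Finset.mem_union] at hj
      obtain ⟨hjNb, hjD⟩ := hj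
      push_neg at hjD
      have hjfil : j ∈ (Nb i).filter fun l => xhat k l < xhat k i :=
        Finset.mem_filter.mpr ⟨hjNb, hij⟩
      rcases hB with ⟨_, hD⟩ | ⟨_, hsub, hcard, hlg⟩
      · exact hjD.2 (hD ▸ hjfil)
      · have hsmall : ∀ l ∈ Dmin, xhat k l < iR k := by
          intro l hl
          exact lt_of_le_of_lt
            (hlg l hl j (Finset.mem_sdiff.mpr ⟨hjfil, hjD.2⟩)) hcon
        have hnotR : ∀ l ∈ insert j Dmin, l ∉ R := by
          intro l hl hlR
          rcases Finset.mem_insert.mp hl with rfl | hl'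
          · exact absurd (Finset.inf'_le (xhat k) hlR) (not_le.mpr hcon)
          · exact absurd (Finset.inf'_le (xhat k) hlR) (not_le.mpr (hsmall l hl'))
        have := hcardF _ hnotR
        rw [Finset.card_insert_of_notMem hjD.2, hcard] at this
        omega
    have hanon : ∀ j ∈ M k i, (0 : ℝ) ≤ a k i j := fun j hj => le_trans hγ0.le (hw j hj)
    have hsum1 : ∑ j ∈ M k i, a k i j ≤ 1 := by linarith
    have hsum0 : (0 : ℝ) ≤ ∑ j ∈ M k i, a k i j := Finset.sum_nonneg hanon
    constructor
    · rw [hx]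
      have h1 : (∑ j ∈ M k i, a k i j) * (iR k - xhat k i) ≤
          ∑ j ∈ M k i, a k i j * (xhat k j - xhat k i) := by
        rw [Finset.sum_mul]
        apply Finset.sum_le_sum
        intro j hj
        exact mul_le_mul_of_nonneg_left (by linarith [hdn j hj]) (hanon j hj)
      nlinarith [mul_le_mul_of_nonneg_right hsum1 (sub_nonneg.mpr hxiL)]
    · rw [hx]
      have h1 : ∑ j ∈ M k i, a k i j * (xhat k j - xhat k i) ≤
          (∑ j ∈ M k i, a k i j) * (sR k - xhat k i) := by
        rw [Finset.sum_mul]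
        apply Finset.sum_le_sum
        intro j hj
        exact mul_le_mul_of_nonneg_left (by linarith [hup j hj]) (hanon j hj)
      nlinarith [mul_le_mul_of_nonneg_right hsum1 (sub_nonneg.mpr hxiU)]
  have hhatstep : ∀ k : ℕ, ∀ i ∈ R, iR k ≤ xhat (k + 1) i ∧ xhat (k + 1) i ≤ sR k := by
    intro k i hi
    obtain ⟨_, _, _, _, hxhat⟩ := hP k i hi
    rw [hxhat]
    split_ifs
    · exact hstep k i hi
    · exact ⟨Finset.inf'_le _ hi, Finset.le_sup' _ hi⟩
  have hsup : ∀ k : ℕ, sR (k + 1) ≤ sR k := by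
    intro k
    exact Finset.sup'_le hR _ fun i hi => (hhatstep k i hi).2
  have hinf : ∀ k : ℕ, iR k ≤ iR (k + 1) := by
    intro k
    exact Finset.le_inf' hR _ fun i hi => (hhatstep k i hi).1
  have hAnti : Antitone sR := antitone_nat_of_succ_le hsup
  have hMono : Monotone iR := monotone_nat_of_le_succ hinf
  set L : ℝ := R.inf' hR fun j => min (x 0 j) (xhat 0 j) with hL
  set U : ℝ := R.sup' hR fun j => max (x 0 j) (xhat 0 j) with hU
  have hL0 : L ≤ iR 0 :=
    Finset.le_inf' hR _ fun j hj =>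
      le_trans (Finset.inf'_le _ hj) (min_le_right _ _)
  have hU0 : sR 0 ≤ U :=
    Finset.sup'_le hR _ fun j hj =>
      le_trans (le_max_right (x 0 j) (xhat 0 j))
        (Finset.le_sup' (fun j => max (x 0 j) (xhat 0 j)) hj)
  have hLk : ∀ k, L ≤ iR k := fun k => le_trans hL0 (hMono (Nat.zero_le k))
  have hUk : ∀ k, sR k ≤ U := fun k => le_trans (hAnti (Nat.zero_le k)) hU0
  refine ⟨?_, hAnti, hMono⟩
  intro i hi k
  constructor
  · cases k with
    | zero =>
      exact ⟨le_trans (Finset.inf'_le _ hi) (min_le_left _ _),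
        le_trans (le_max_left (x 0 i) (xhat 0 i))
          (Finset.le_sup' (fun j => max (x 0 j) (xhat 0 j)) hi)⟩
    | succ k =>
      obtain ⟨h1, h2⟩ := hstep k i hi
      exact ⟨le_trans (hLk k) h1, le_trans h2 (hUk k)⟩
  · exact ⟨le_trans (hLk k) (Finset.inf'_le _ hi),
      le_trans (Finset.le_sup' _ hi) (hUk k)⟩
end

section
/- (Disjointness estimate, used in the proof of Theorem 1.) Let 0 < γ ≤ 1/2, c0 ≥ 0, c1 ≥ 0, α > 0, V0 > 0, and let ε > 0 and σ > 0 satisfy ε + σ = 1/2. Let M, m be reals with M − m = V0. Define sequences by x̄0(0) = M − σ·V0, x̲0(0) = m + σ·V0, x̄0(k+1) = x̄0(k) + c0 + c1·e^{−α(k−1)}, x̲0(k+1) = x̲0(k) − c0 − c1·e^{−α(k−1)}, and ε0(0) = ε·V0, ε0(k+1) = γ·ε0(k) − (1−γ)·σ·V0. Then for every k ≥ 1, (x̄0(k) − ε0(k)) − (x̲0(k) + ε0(k)) > 0. -/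
/-- Disjointness estimate used in the proof of Theorem 1: with `0 < γ ≤ 1/2`,
`c0, c1 ≥ 0`, `α > 0`, `V0 > 0`, `ε, σ > 0` with `ε + σ = 1/2`, and `M - m = V0`,
the sequences defined by `x̄0(0) = M - σV0`, `x̲0(0) = m + σV0`,
`x̄0(k+1) = x̄0(k) + c0 + c1·e^{-α(k-1)}`, `x̲0(k+1) = x̲0(k) - c0 - c1·e^{-α(k-1)}`,
`ε0(0) = ε·V0`, `ε0(k+1) = γ·ε0(k) - (1-γ)·σ·V0` satisfy, for every `k ≥ 1`,
`(x̄0(k) - ε0(k)) - (x̲0(k) + ε0(k)) > 0`. -/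
theorem disjointness_estimate {γ c0 c1 α ε σ V0 M m : ℝ}
    (hγ0 : 0 < γ) (hγ : γ ≤ 1 / 2) (hc0 : 0 ≤ c0) (hc1 : 0 ≤ c1) (hα : 0 < α)
    (hV0 : 0 < V0) (hε : 0 < ε) (hσ : 0 < σ) (hεσ : ε + σ = 1 / 2)
    (hMm : M - m = V0)
    (xb xl e0 : ℕ → ℝ)
    (hxb0 : xb 0 = M - σ * V0) (hxl0 : xl 0 = m + σ * V0)
    (hxb : ∀ k : ℕ, xb (k + 1) = xb k + c0 + c1 * Real.exp (-α * ((k : ℝ) - 1)))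
    (hxl : ∀ k : ℕ, xl (k + 1) = xl k - c0 - c1 * Real.exp (-α * ((k : ℝ) - 1)))
    (he0 : e0 0 = ε * V0)
    (herec : ∀ k : ℕ, e0 (k + 1) = γ * e0 k - (1 - γ) * σ * V0) :
    ∀ k : ℕ, 1 ≤ k → 0 < (xb k - e0 k) - (xl k + e0 k) := by
  have hεV : 0 < ε * V0 := mul_pos hε hV0
  -- e0 k ≤ ε * V0 for all k
  have hA : ∀ k : ℕ, e0 k ≤ ε * V0 := by
    intro k
    induction k with
    | zero => rw [he0]
    | succ n ih =>
      rw [herec n]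
      have h1 : γ * e0 n ≤ γ * (ε * V0) := mul_le_mul_of_nonneg_left ih hγ0.le
      have h2 : γ * (ε * V0) ≤ ε * V0 := by nlinarith
      nlinarith [mul_nonneg (mul_nonneg (by linarith : (0:ℝ) ≤ 1 - γ) hσ.le) hV0.le]
  -- xb k - xl k ≥ 2 ε V0
  have hB : ∀ k : ℕ, 2 * (ε * V0) ≤ xb k - xl k := by
    intro k
    induction k with
    | zero =>
      rw [hxb0, hxl0]
      nlinarith
    | succ n ih =>
      rw [hxb n, hxl n]
      have := Real.exp_pos (-α * ((n : ℝ) - 1))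
      nlinarith [mul_nonneg hc1 this.le]
  intro k hk
  obtain ⟨j, rfl⟩ := Nat.exists_eq_add_of_le hk
  have he : e0 (1 + j) ≤ γ * (ε * V0) := by
    have : 1 + j = j + 1 := by ring
    rw [this, herec j]
    have h1 : γ * e0 j ≤ γ * (ε * V0) := mul_le_mul_of_nonneg_left (hA j) hγ0.le
    nlinarith [mul_nonneg (mul_nonneg (by linarith : (0:ℝ) ≤ 1 - γ) hσ.le) hV0.le]
  have hb := hB (1 + j)
  nlinarith
end

section
/- (Escape inequality, used in the proof of Theorem 2.) Let 0 < γ ≤ 1/2, C > 0, let m ≥ 1 be an integer, and let v_1 ≤ v_2 ≤ ⋯ ≤ v_{m+1} be reals such that v_{p+1} − v_p ≤ C/γ^p for every 1 ≤ p ≤ m−1 and v_{m+1} − v_m > C/γ^m. Then (1−γ)·v_1 + γ·v_{m+1} > v_m + C. -/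
/-!
Multiplied by `1 - γ`, the telescoped gap bounds give
`(1 - γ) (v m - v 1) ≤ (1 - γ) ∑_{1 ≤ p < m} C/γ^p = C/γ^(m-1) - C`,
whereas `γ` times the last gap exceeds `C/γ^(m-1)`.
-/

lemma one_sub_mul_sub_le_of_sub_le_div_pow {γ C : ℝ} (hγ0 : γ ≠ 0) (hγ1 : γ ≤ 1)
    {v : ℕ → ℝ} {n : ℕ} (hgap : ∀ p : ℕ, 1 ≤ p → p ≤ n → v (p + 1) - v p ≤ C / γ ^ p) :
    (1 - γ) * (v (n + 1) - v 1) ≤ C / γ ^ n - C := by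
  induction n with
  | zero => simp
  | succ n ih =>
    have hprev := ih fun p hp hpn => hgap p hp (by omega)
    have hlast := hgap (n + 1) (by omega) le_rfl
    have hgeom : C / γ ^ n + (1 - γ) * (C / γ ^ (n + 1)) = C / γ ^ (n + 1) := by
      field_simp
      ring
    linarith [mul_le_mul_of_nonneg_left hlast (sub_nonneg.mpr hγ1)]

theorem escape_inequality_general {γ C : ℝ} {m : ℕ}
    (hγ0 : 0 < γ) (hγ : γ ≤ 1 / 2)
    (v : ℕ → ℝ)
    (hgap : ∀ p : ℕ, 1 ≤ p → p ≤ m - 1 → v (p + 1) - v p ≤ C / γ ^ p)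
    (hbig : C / γ ^ m < v (m + 1) - v m) :
    v m + C < (1 - γ) * v 1 + γ * v (m + 1) := by
  cases m with
  | zero =>
    simp only [pow_zero, div_one, zero_add] at hbig ⊢
    linarith
  | succ n =>
    have hsum := one_sub_mul_sub_le_of_sub_le_div_pow hγ0.ne' (by linarith) (v := v) (n := n)
      fun p hp hpn => hgap p hp (by omega)
    have hlast : C / γ ^ n < γ * (v (n + 2) - v (n + 1)) := by
      calc C / γ ^ n = γ * (C / γ ^ (n + 1)) := by field_simp; ring
        _ < γ * (v (n + 2) - v (n + 1)) := mul_lt_mul_of_pos_left hbig hγ0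
    linarith

/-- Escape inequality used in the proof of Theorem 2: let `0 < γ ≤ 1/2`, `C > 0`,
`m ≥ 1`, and let `v 1 ≤ v 2 ≤ ⋯ ≤ v (m+1)` be reals such that
`v (p+1) - v p ≤ C/γ^p` for every `1 ≤ p ≤ m-1` and `v (m+1) - v m > C/γ^m`.
Then `(1-γ)·v 1 + γ·v (m+1) > v m + C`. -/
theorem escape_inequality {γ C : ℝ} {m : ℕ}
    (hγ0 : 0 < γ) (hγ : γ ≤ 1 / 2) (hC : 0 < C) (hm : 1 ≤ m)
    (v : ℕ → ℝ)
    (hmono : ∀ p : ℕ, 1 ≤ p → p ≤ m → v p ≤ v (p + 1))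
    (hgap : ∀ p : ℕ, 1 ≤ p → p ≤ m - 1 → v (p + 1) - v p ≤ C / γ ^ p)
    (hbig : C / γ ^ m < v (m + 1) - v m) :
    v m + C < (1 - γ) * v 1 + γ * v (m + 1) :=
  escape_inequality_general hγ0 hγ v hgap hbig
end

section
/- (Claim of Remark 1.) Consider the variant update rule in which each regular node i ∈ R updates x_i(k+1) = x_i(k) + Σ_{j∈M_i(k)} a_{ij}(k)(x̂_j(k) − x̂_i(k)) (its own broadcast value x̂_i(k) replacing x_i(k) in the differences), with the same MSR filter, weight conditions, and event-triggered broadcast rule as in Protocol 1. If the directed graph G is (F+1,F+1)-robust, N = |R| ≥ 1, c ≥ 0, and c0 ≤ γ^N·c/(8N), then for all regular nodes i,j ∈ R, for every behavior of the malicious nodes, all initial values, and all admissible weight choices, lim sup_{k→∞} |x_i(k) − x_j(k)| ≤ c. -/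
open Finset

/-- The variant protocol of Remark 1 (event-based MSR): every regular node `i ∈ R`
filters its neighbors' broadcast values relative to its own state `x k i`, updates
`x (k+1) i = x k i + Σ_{j ∈ M k i} a k i j * (x̂ k j - x̂ k i)` with weights bounded
below by `γ` (including the self-weight `1 - Σ a k i j`), and broadcasts the new state
exactly when `|x̂ k i - x (k+1) i| > c0 + c1·exp(-α k)`. Malicious nodes
(those outside `R`) are unconstrained. -/
def ProtocolVariant {n : ℕ} (F : ℕ) (Nb : Fin n → Finset (Fin n)) (R : Finset (Fin n))
    (γ c0 c1 α : ℝ) (x xhat : ℕ → Fin n → ℝ)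
    (a : ℕ → Fin n → Fin n → ℝ) (M : ℕ → Fin n → Finset (Fin n)) : Prop :=
  ∀ k : ℕ, ∀ i ∈ R,
    (∃ Dmax Dmin : Finset (Fin n),
        MSRAbove (Nb i) (xhat k) (x k i) F Dmax ∧
        MSRBelow (Nb i) (xhat k) (x k i) F Dmin ∧
        M k i = Nb i \ (Dmax ∪ Dmin)) ∧
    (∀ j ∈ M k i, γ ≤ a k i j) ∧
    γ ≤ 1 - ∑ j ∈ M k i, a k i j ∧
    x (k + 1) i = x k i + ∑ j ∈ M k i, a k i j * (xhat k j - xhat k i) ∧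
    xhat (k + 1) i =
      if c0 + c1 * Real.exp (-α * (k : ℝ)) < |xhat k i - x (k + 1) i| then x (k + 1) i
      else xhat k i

/-! The MSR filter lets a regular node use only values within the range of the regular
nodes' values, and its update is a convex combination of them with all weights at least `γ`,
perturbed by its tracking error `|x̂_i - x_i|`; this error is eventually below any bound
`E > c0`. Start two levels at the midpoint of the range `[v, V]` of regular states and
broadcast values and let them move geometrically (rate `γ`) towards the two ends. As long as
both levels are crossed by regular nodes, `(F+1,F+1)`-robustness gives a regular node beyond
one level with `F + 1` neighbors not beyond it; one of their values survives the filter and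
pulls the node back across, and no node crosses outwards again. So within `N = |R|` steps no
regular node is left beyond one of the levels, and the spread `V - v` has contracted by the
factor `1 - γ ^ N / 2` up to `(2N + 3) E`. Iterating gives
`limsup (V - v) ≤ 2 (2N + 3) c0 / γ ^ N ≤ c`. -/

theorem add_sum_mul_le_of_exists_le {ι : Type*} {s : Finset ι} {w v : ι → ℝ}
    {w₀ v₀ γ U W : ℝ} (hγ : 0 ≤ γ) (hw₀ : γ ≤ w₀) (hw : ∀ j ∈ s, γ ≤ w j)
    (hsum : w₀ + ∑ j ∈ s, w j = 1) (hv₀ : v₀ ≤ U) (hv : ∀ j ∈ s, v j ≤ U)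
    (hW : v₀ ≤ W ∨ ∃ j ∈ s, v j ≤ W) :
    w₀ * v₀ + ∑ j ∈ s, w j * v j ≤ γ * W + (1 - γ) * U := by
  have hgap : U - (w₀ * v₀ + ∑ j ∈ s, w j * v j)
      = w₀ * (U - v₀) + ∑ j ∈ s, w j * (U - v j) := by
    simp only [mul_sub, sum_sub_distrib, ← sum_mul]
    linear_combination (-U) * hsum
  have hterm : ∀ j ∈ s, 0 ≤ w j * (U - v j) :=
    fun j hj => mul_nonneg (hγ.trans (hw j hj)) (sub_nonneg.2 (hv j hj))
  rcases hW with hW | ⟨j, hj, hW⟩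
  · have := sum_nonneg hterm
    nlinarith
  · have := single_le_sum hterm hj
    nlinarith [hw j hj, hv j hj]

theorem eq_empty_or_eq_empty_of_card_add_lt {α : Type*} {A B : ℕ → Finset α} {N : ℕ}
    (hA : ∀ t < N, A (t + 1) ⊆ A t) (hB : ∀ t < N, B (t + 1) ⊆ B t)
    (hlt : ∀ t < N, (A t).Nonempty → (B t).Nonempty →
      (A (t + 1)).card + (B (t + 1)).card < (A t).card + (B t).card)
    (h0 : (A 0).card + (B 0).card ≤ N) : A N = ∅ ∨ B N = ∅ := by
  suffices h : ∀ t ≤ N, A t = ∅ ∨ B t = ∅ ∨ (A t).card + (B t).card + t ≤ N by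
    rcases h N le_rfl with h | h | h
    exacts [Or.inl h, Or.inr h, Or.inl (card_eq_zero.1 (by omega))]
  intro t ht
  induction t with
  | zero => exact Or.inr (Or.inr (by simpa using h0))
  | succ t ih =>
    rcases ih (by omega) with h | h | h
    · exact Or.inl (subset_empty.1 (h ▸ hA t (by omega)))
    · exact Or.inr (Or.inl (subset_empty.1 (h ▸ hB t (by omega))))
    · rcases (A t).eq_empty_or_nonempty with hAe | hAn
      · exact Or.inl (subset_empty.1 (hAe ▸ hA t (by omega)))
      rcases (B t).eq_empty_or_nonempty with hBe | hBn
      · exact Or.inr (Or.inl (subset_empty.1 (hBe ▸ hB t (by omega))))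
      have := hlt t (by omega) hAn hBn
      omega

section Limits

open Filter

theorem eventually_le_of_le_mul_add {D : ℕ → ℝ} {q b δ : ℝ} {N k₀ : ℕ} (hN : 0 < N)
    (hD : ∀ k, 0 ≤ D k) (hq₀ : 0 ≤ q) (hq₁ : q < 1) (hb : 0 ≤ b) (hδ : 0 < δ)
    (hrec : ∀ k ≥ k₀, D (k + N) ≤ q * D k + b) :
    ∀ᶠ k in atTop, D k ≤ b / (1 - q) + δ := by
  have hq : 0 < 1 - q := sub_pos.2 hq₁
  set C := ∑ r ∈ Finset.range N, D (k₀ + r)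
  have hC : 0 ≤ C := Finset.sum_nonneg fun r _ => hD _
  have hiter : ∀ s, ∀ r < N, D (k₀ + r + s * N) ≤ q ^ s * C + b / (1 - q) := by
    intro s r hr
    induction s with
    | zero =>
      have : D (k₀ + r) ≤ C :=
        Finset.single_le_sum (fun r _ => hD (k₀ + r)) (Finset.mem_range.2 hr)
      simpa using this.trans (le_add_of_nonneg_right (div_nonneg hb hq.le))
    | succ s ih =>
      have hfix : q * (b / (1 - q)) + b = b / (1 - q) := by field_simp; ring
      calc D (k₀ + r + (s + 1) * N) = D (k₀ + r + s * N + N) := by ring_nf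
        _ ≤ q * D (k₀ + r + s * N) + b := hrec _ (by omega)
        _ ≤ q * (q ^ s * C + b / (1 - q)) + b := by gcongr
        _ = q ^ (s + 1) * C + b / (1 - q) := by rw [pow_succ]; linear_combination hfix
  obtain ⟨s₀, hs₀⟩ := eventually_atTop.1
    (((tendsto_pow_atTop_nhds_zero_of_lt_one hq₀ hq₁).mul_const C).eventually
      (gt_mem_nhds (by simpa using hδ)))
  refine eventually_atTop.2 ⟨k₀ + s₀ * N, fun k hk => ?_⟩
  have hk' : k = k₀ + (k - k₀) % N + (k - k₀) / N * N := by
    have := Nat.mod_add_div (k - k₀) N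
    rw [Nat.mul_comm] at this
    omega
  have hs : s₀ ≤ (k - k₀) / N := (Nat.le_div_iff_mul_le hN).2 (by omega)
  rw [hk']
  calc _ ≤ q ^ ((k - k₀) / N) * C + b / (1 - q) := hiter _ _ (Nat.mod_lt _ hN)
    _ ≤ q ^ s₀ * C + b / (1 - q) := by
        gcongr ?_ + _
        exact mul_le_mul_of_nonneg_right (pow_le_pow_of_le_one hq₀ hq₁.le hs) hC
    _ ≤ b / (1 - q) + δ := by linarith [hs₀ s₀ le_rfl]

theorem limsup_le_of_forall_eventually_le {f : ℕ → ℝ} {c : ℝ} (hf : ∀ k, 0 ≤ f k)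
    (h : ∀ ε > 0, ∀ᶠ k in atTop, f k ≤ c + ε) : limsup f atTop ≤ c :=
  le_of_forall_pos_le_add fun ε hε =>
    limsup_le_of_le (isCoboundedUnder_le_of_le atTop hf) (h ε hε)

end Limits

namespace MSRAbove

variable {n F : ℕ} {Nbhd D : Finset (Fin n)} {val : Fin n → ℝ} {xi : ℝ}

theorem subset_filter (hD : MSRAbove Nbhd val xi F D) :
    D ⊆ Nbhd.filter fun j => xi < val j := by
  rcases hD with ⟨-, rfl⟩ | ⟨-, hsub, -⟩
  exacts [Subset.rfl, hsub]

/-- Among the `F + 1` nodes formed by `j` and the `F` removed ones, one is regular. -/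
theorem exists_mem_le (hD : MSRAbove Nbhd val xi F D) {R : Finset (Fin n)}
    (hF : (univ \ R).card ≤ F) {j : Fin n} (hj : j ∈ Nbhd) (hjD : j ∉ D) (hxj : xi < val j) :
    ∃ r ∈ R, val j ≤ val r := by
  have hjf : j ∈ Nbhd.filter fun l => xi < val l := mem_filter.2 ⟨hj, hxj⟩
  rcases hD with ⟨-, rfl⟩ | ⟨-, -, hcard, hmax⟩
  · exact absurd hjf hjD
  obtain ⟨r, hr, hrR⟩ := exists_mem_notMem_of_card_lt_card (s := univ \ R) (t := insert j D)
    (by rw [card_insert_of_notMem hjD]; omega)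
  have hrR : r ∈ R := by simpa using hrR
  rcases mem_insert.1 hr with rfl | hrD
  · exact ⟨r, hrR, le_rfl⟩
  · exact ⟨r, hrR, hmax r hrD j (mem_sdiff.2 ⟨hjf, hjD⟩)⟩

end MSRAbove

theorem MSRBelow.exists_mem_notMem {n F : ℕ} {Nbhd D L : Finset (Fin n)} {val : Fin n → ℝ}
    {xi : ℝ} (hD : MSRBelow Nbhd val xi F D) (hL : L ⊆ Nbhd.filter fun j => val j < xi)
    (hcard : F < L.card) : ∃ j ∈ L, j ∉ D := by
  rcases hD with ⟨hlt, -⟩ | ⟨-, -, hD, -⟩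
  · have := card_le_card hL
    omega
  · exact exists_mem_notMem_of_card_lt_card (hD ▸ hcard)

theorem msrAbove_neg_iff {n F : ℕ} {Nbhd D : Finset (Fin n)} {val : Fin n → ℝ} {xi : ℝ} :
    MSRAbove Nbhd (-val) (-xi) F D ↔ MSRBelow Nbhd val xi F D := by
  simp [MSRAbove, MSRBelow]

theorem msrBelow_neg_iff {n F : ℕ} {Nbhd D : Finset (Fin n)} {val : Fin n → ℝ} {xi : ℝ} :
    MSRBelow Nbhd (-val) (-xi) F D ↔ MSRAbove Nbhd val xi F D := by
  simp [MSRAbove, MSRBelow]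

namespace IsRobust

variable {n F : ℕ} {Nb : Fin n → Finset (Fin n)} {R : Finset (Fin n)}

theorem exists_mem_lt_card_sdiff (hRobust : IsRobust Nb (F + 1) (F + 1))
    (hF : (univ \ R).card ≤ F) {Z₁ Z₂ : Finset (Fin n)} (hdisj : Disjoint Z₁ Z₂)
    (h₁ : (Z₁ ∩ R).Nonempty) (h₂ : (Z₂ ∩ R).Nonempty) :
    ∃ i ∈ R, (i ∈ Z₁ ∧ F < (Nb i \ Z₁).card) ∨ (i ∈ Z₂ ∧ F < (Nb i \ Z₂).card) := by
  obtain ⟨i₁, hi₁⟩ := h₁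
  obtain ⟨i₂, hi₂⟩ := h₂
  rw [mem_inter] at hi₁ hi₂
  rcases hRobust Z₁ Z₂ ⟨i₁, hi₁.1⟩ ⟨i₂, hi₂.1⟩ hdisj with h | h | h
  · exact ⟨i₁, hi₁.2, Or.inl (mem_filter.1 (h.symm ▸ hi₁.1 : i₁ ∈ reachSet Nb (F + 1) Z₁))⟩
  · exact ⟨i₂, hi₂.2, Or.inr (mem_filter.1 (h.symm ▸ hi₂.1 : i₂ ∈ reachSet Nb (F + 1) Z₂))⟩
  · have hdisj' : Disjoint (reachSet Nb (F + 1) Z₁) (reachSet Nb (F + 1) Z₂) :=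
      hdisj.mono (filter_subset _ _) (filter_subset _ _)
    obtain ⟨i, hi, hiR⟩ := exists_mem_notMem_of_card_lt_card (s := univ \ R)
      (t := reachSet Nb (F + 1) Z₁ ∪ reachSet Nb (F + 1) Z₂)
      (by rw [card_union_of_disjoint hdisj']; omega)
    have hiR : i ∈ R := by simpa using hiR
    rcases mem_union.1 hi with hi | hi
    exacts [⟨i, hiR, Or.inl (mem_filter.1 hi)⟩, ⟨i, hiR, Or.inr (mem_filter.1 hi)⟩]

/-- By `exists_mem_lt_card_sdiff`, every step removes a regular node from one of the two
families. -/
theorem inter_eq_empty_or_inter_eq_empty (hRobust : IsRobust Nb (F + 1) (F + 1))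
    (hF : (univ \ R).card ≤ F) {N : ℕ} (hN : R.card ≤ N) {Z₁ Z₂ : ℕ → Finset (Fin n)}
    (hdisj : ∀ t ≤ N, Disjoint (Z₁ t) (Z₂ t))
    (h₁ : ∀ t < N, ∀ i ∈ R, (i ∉ Z₁ t ∨ F < (Nb i \ Z₁ t).card) → i ∉ Z₁ (t + 1))
    (h₂ : ∀ t < N, ∀ i ∈ R, (i ∉ Z₂ t ∨ F < (Nb i \ Z₂ t).card) → i ∉ Z₂ (t + 1)) :
    Z₁ N ∩ R = ∅ ∨ Z₂ N ∩ R = ∅ := by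
  have hmono : ∀ Z : ℕ → Finset (Fin n),
      (∀ t < N, ∀ i ∈ R, (i ∉ Z t ∨ F < (Nb i \ Z t).card) → i ∉ Z (t + 1)) →
      ∀ t < N, Z (t + 1) ∩ R ⊆ Z t ∩ R := by
    intro Z hZ t ht i hi
    rw [mem_inter] at hi ⊢
    by_contra h
    exact hZ t ht i hi.2 (Or.inl fun h' => h ⟨h', hi.2⟩) hi.1
  have hleave : ∀ Z : ℕ → Finset (Fin n),
      (∀ t < N, ∀ i ∈ R, (i ∉ Z t ∨ F < (Nb i \ Z t).card) → i ∉ Z (t + 1)) →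
      ∀ t < N, ∀ i ∈ R, i ∈ Z t → F < (Nb i \ Z t).card →
        (Z (t + 1) ∩ R).card < (Z t ∩ R).card := by
    intro Z hZ t ht i hi hiZ hcard
    refine card_lt_card ((ssubset_iff_of_subset (hmono Z hZ t ht)).2 ⟨i, ?_, ?_⟩)
    · exact mem_inter.2 ⟨hiZ, hi⟩
    · exact fun h => hZ t ht i hi (Or.inr hcard) (mem_inter.1 h).1
  refine eq_empty_or_eq_empty_of_card_add_lt (A := fun t => Z₁ t ∩ R)
    (B := fun t => Z₂ t ∩ R) (hmono Z₁ h₁) (hmono Z₂ h₂) (fun t ht hn₁ hn₂ => ?_) ?_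
  · have hc₁ := card_le_card (hmono Z₁ h₁ t ht)
    have hc₂ := card_le_card (hmono Z₂ h₂ t ht)
    obtain ⟨i, hi, ⟨hiZ, hcard⟩ | ⟨hiZ, hcard⟩⟩ :=
      hRobust.exists_mem_lt_card_sdiff hF (hdisj t ht.le) hn₁ hn₂
    · linarith [hleave Z₁ h₁ t ht i hi hiZ hcard]
    · linarith [hleave Z₂ h₂ t ht i hi hiZ hcard]
  · rw [← card_union_of_disjoint ((hdisj 0 (Nat.zero_le _)).mono inter_subset_left
      inter_subset_left)]
    exact (card_le_card (union_subset inter_subset_right inter_subset_right)).trans hN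

end IsRobust

/-- Malicious nodes are judged by their broadcast value alone; broadcast values get the slack
`E` of the tracking error. -/
noncomputable def aboveSet {n : ℕ} (R : Finset (Fin n)) (y yhat : Fin n → ℝ) (L E : ℝ) :
    Finset (Fin n) :=
  univ.filter fun i => (i ∈ R ∧ L < y i) ∨ L + E < yhat i

noncomputable def regularMax {n : ℕ} (R : Finset (Fin n)) (hR : R.Nonempty)
    (y yhat : Fin n → ℝ) : ℝ :=
  R.sup' hR fun i => max (y i) (yhat i)

/-- `V - v`, with the minimum `v` of the regular values written as `-regularMax` of the
negated values. -/
noncomputable def spread {n : ℕ} (R : Finset (Fin n)) (hR : R.Nonempty) (y yhat : Fin n → ℝ) :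
    ℝ :=
  regularMax R hR y yhat + regularMax R hR (-y) (-yhat)

section Range

variable {n : ℕ} {R : Finset (Fin n)} {y yhat : Fin n → ℝ} {L L' E : ℝ} {i j : Fin n}

theorem mem_aboveSet : i ∈ aboveSet R y yhat L E ↔ (i ∈ R ∧ L < y i) ∨ L + E < yhat i := by
  simp [aboveSet]

theorem notMem_aboveSet_of_mem (hi : i ∈ R) :
    i ∉ aboveSet R y yhat L E ↔ y i ≤ L ∧ yhat i ≤ L + E := by
  simp [mem_aboveSet, hi]

theorem le_of_notMem_aboveSet (h : i ∉ aboveSet R y yhat L E) : yhat i ≤ L + E := by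
  simp_all [mem_aboveSet]

theorem disjoint_aboveSet_neg (htrack : ∀ i ∈ R, |yhat i - y i| ≤ E) (hE : 0 ≤ E)
    (hL : 0 ≤ L + L') : Disjoint (aboveSet R y yhat L E) (aboveSet R (-y) (-yhat) L' E) := by
  refine disjoint_left.2 fun i h₁ h₂ => ?_
  simp only [mem_aboveSet, Pi.neg_apply] at h₁ h₂
  rcases h₁ with ⟨hi, h₁⟩ | h₁ <;> rcases h₂ with ⟨hi, h₂⟩ | h₂
  all_goals first
    | linarith
    | have := abs_le.1 (htrack i hi); linarith

variable {hR : R.Nonempty}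

theorem regularMax_le_iff {U : ℝ} :
    regularMax R hR y yhat ≤ U ↔ ∀ i ∈ R, y i ≤ U ∧ yhat i ≤ U := by
  simp [regularMax]

theorem le_regularMax (hi : i ∈ R) :
    y i ≤ regularMax R hR y yhat ∧ yhat i ≤ regularMax R hR y yhat :=
  regularMax_le_iff.1 le_rfl i hi

theorem regularMax_le_of_aboveSet_inter_eq_empty (h : aboveSet R y yhat L E ∩ R = ∅)
    (hE : 0 ≤ E) : regularMax R hR y yhat ≤ L + E := by
  refine regularMax_le_iff.2 fun i hi => ?_
  have hiZ : i ∉ aboveSet R y yhat L E := fun hiZ => by simpa [h] using mem_inter.2 ⟨hiZ, hi⟩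
  have := (notMem_aboveSet_of_mem hi).1 hiZ
  exact ⟨by linarith [this.1], this.2⟩

theorem abs_sub_le_spread (hi : i ∈ R) (hj : j ∈ R) : |y i - y j| ≤ spread R hR y yhat := by
  have hi₁ := (le_regularMax (hR := hR) (y := y) (yhat := yhat) hi).1
  have hj₁ := (le_regularMax (hR := hR) (y := y) (yhat := yhat) hj).1
  have hi₂ := (le_regularMax (hR := hR) (y := -y) (yhat := -yhat) hi).1
  have hj₂ := (le_regularMax (hR := hR) (y := -y) (yhat := -yhat) hj).1
  rw [Pi.neg_apply] at hi₂ hj₂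
  rw [spread, abs_sub_le_iff]
  constructor <;> linarith

theorem spread_nonneg : 0 ≤ spread R hR y yhat := by
  obtain ⟨i, hi⟩ := hR
  simpa using abs_sub_le_spread (y := y) (yhat := yhat) hi hi

end Range

namespace ProtocolVariant

variable {n F : ℕ} {Nb : Fin n → Finset (Fin n)} {R : Finset (Fin n)} {γ c0 c1 α : ℝ}
  {x xhat : ℕ → Fin n → ℝ} {a : ℕ → Fin n → Fin n → ℝ} {M : ℕ → Fin n → Finset (Fin n)}
  {i : Fin n} {k : ℕ} {U W E : ℝ}

theorem neg (hP : ProtocolVariant F Nb R γ c0 c1 α x xhat a M) :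
    ProtocolVariant F Nb R γ c0 c1 α (-x) (-xhat) a M := by
  intro k i hi
  obtain ⟨⟨Dmax, Dmin, hDmax, hDmin, hM⟩, hw, hself, hupd, hbr⟩ := hP k i hi
  refine ⟨⟨Dmin, Dmax, msrAbove_neg_iff.2 hDmin, msrBelow_neg_iff.2 hDmax,
    hM.trans (by rw [union_comm])⟩, hw, hself, ?_, ?_⟩
  · simp only [Pi.neg_apply, hupd, neg_add, ← sum_neg_distrib]
    congr 1
    exact sum_congr rfl fun j _ => by ring
  · simp only [Pi.neg_apply, hbr, ← neg_sub', abs_neg]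
    split_ifs <;> rfl

theorem xhat_succ_eq_or (hP : ProtocolVariant F Nb R γ c0 c1 α x xhat a M) (hi : i ∈ R)
    (k : ℕ) : xhat (k + 1) i = x (k + 1) i ∨ xhat (k + 1) i = xhat k i := by
  rw [(hP k i hi).2.2.2.2]
  split_ifs
  exacts [Or.inl rfl, Or.inr rfl]

theorem abs_xhat_sub_x_succ_le (hP : ProtocolVariant F Nb R γ c0 c1 α x xhat a M)
    (hi : i ∈ R) (hE : 0 ≤ E) (hthr : c0 + c1 * Real.exp (-α * k) ≤ E) :
    |xhat (k + 1) i - x (k + 1) i| ≤ E := by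
  rw [(hP k i hi).2.2.2.2]
  split_ifs with h
  · simpa using hE
  · exact (not_lt.1 h).trans hthr

open Filter in
theorem eventually_abs_xhat_sub_x_le (hP : ProtocolVariant F Nb R γ c0 c1 α x xhat a M)
    (hα : 0 < α) (hE : 0 ≤ E) (hcE : c0 < E) :
    ∀ᶠ k in atTop, ∀ i ∈ R, |xhat k i - x k i| ≤ E := by
  have hdecay : Tendsto (fun k : ℕ => c0 + c1 * Real.exp (-α * k)) atTop (nhds c0) := by
    have : Tendsto (fun k : ℕ => -α * k) atTop atBot :=
      tendsto_natCast_atTop_atTop.const_mul_atTop_of_neg (neg_neg_of_pos hα)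
    simpa using (Real.tendsto_exp_atBot.comp this).const_mul c1 |>.const_add c0
  obtain ⟨k₀, hk₀⟩ := eventually_atTop.1 (hdecay.eventually (gt_mem_nhds hcE))
  refine eventually_atTop.2 ⟨k₀ + 1, fun k hk i hi => ?_⟩
  obtain ⟨m, rfl⟩ := Nat.exists_eq_add_of_le' (Nat.one_le_of_lt hk)
  exact hP.abs_xhat_sub_x_succ_le hi hE (hk₀ m (by omega)).le

theorem xhat_le_of_mem (hP : ProtocolVariant F Nb R γ c0 c1 α x xhat a M)
    (hF : (univ \ R).card ≤ F) (hi : i ∈ R) (hxi : x k i ≤ U) (hU : ∀ l ∈ R, xhat k l ≤ U)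
    {j : Fin n} (hj : j ∈ M k i) : xhat k j ≤ U := by
  obtain ⟨⟨Dmax, Dmin, hDmax, -, hM⟩, -⟩ := hP k i hi
  simp only [hM, mem_sdiff, mem_union, not_or] at hj
  by_cases hle : xhat k j ≤ x k i
  · exact hle.trans hxi
  obtain ⟨r, hr, hjr⟩ := hDmax.exists_mem_le hF hj.1 hj.2.1 (not_le.1 hle)
  exact hjr.trans (hU r hr)

theorem exists_mem_le (hP : ProtocolVariant F Nb R γ c0 c1 α x xhat a M) (hi : i ∈ R)
    {L : Finset (Fin n)} (hL : L ⊆ Nb i) (hcard : F < L.card) (hW : ∀ j ∈ L, xhat k j ≤ W)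
    (hxi : W < x k i) : ∃ j ∈ M k i, xhat k j ≤ W := by
  obtain ⟨⟨Dmax, Dmin, hDmax, hDmin, hM⟩, -⟩ := hP k i hi
  have hlow : ∀ j ∈ L, xhat k j < x k i := fun j hj => (hW j hj).trans_lt hxi
  obtain ⟨j, hjL, hjD⟩ := hDmin.exists_mem_notMem
    (fun j hj => mem_filter.2 ⟨hL hj, hlow j hj⟩) hcard
  have hjDmax : j ∉ Dmax :=
    fun h => (hlow j hjL).not_gt (mem_filter.1 (hDmax.subset_filter h)).2
  exact ⟨j, hM ▸ mem_sdiff.2 ⟨hL hjL, by simp [hjD, hjDmax]⟩, hW j hjL⟩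

/-- With `s = Σ a_ij`, the update is the convex combination `(1 - s) x_i + Σ a_ij x̂_j`
perturbed by `s (x_i - x̂_i)`. -/
theorem x_succ_le (hP : ProtocolVariant F Nb R γ c0 c1 α x xhat a M) (hγ : 0 ≤ γ) (hi : i ∈ R)
    (hxi : x k i ≤ U) (hM : ∀ j ∈ M k i, xhat k j ≤ U) (htrack : |xhat k i - x k i| ≤ E)
    (hW : x k i ≤ W ∨ ∃ j ∈ M k i, xhat k j ≤ W) :
    x (k + 1) i ≤ γ * W + (1 - γ) * U + (1 - γ) * E := by
  obtain ⟨-, hw, hself, hupd, -⟩ := hP k i hi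
  set s := ∑ j ∈ M k i, a k i j
  have hs : 0 ≤ s := sum_nonneg fun j hj => hγ.trans (hw j hj)
  have hsplit : x (k + 1) i
      = ((1 - s) * x k i + ∑ j ∈ M k i, a k i j * xhat k j) + s * (x k i - xhat k i) := by
    rw [hupd]
    simp only [s, mul_sub, sum_sub_distrib, ← sum_mul]
    ring
  have hconv := add_sum_mul_le_of_exists_le hγ hself hw (by ring) hxi hM hW
  have herr : s * (x k i - xhat k i) ≤ (1 - γ) * E :=
    calc s * (x k i - xhat k i) ≤ s * E := by
          gcongr
          linarith [(abs_le.1 htrack).1]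
      _ ≤ (1 - γ) * E := by
          gcongr
          · exact (abs_nonneg _).trans htrack
          · linarith
  linarith

theorem bound_succ (hP : ProtocolVariant F Nb R γ c0 c1 α x xhat a M)
    (hF : (univ \ R).card ≤ F) (hγ : 0 ≤ γ) (hU : ∀ l ∈ R, x k l ≤ U ∧ xhat k l ≤ U)
    (htrack : ∀ l ∈ R, |xhat k l - x k l| ≤ E) :
    ∀ l ∈ R, x (k + 1) l ≤ U + E ∧ xhat (k + 1) l ≤ U + E := by
  intro l hl
  have hE : 0 ≤ E := (abs_nonneg _).trans (htrack l hl)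
  have hx : x (k + 1) l ≤ U + E := by
    have := hP.x_succ_le hγ hl (hU l hl).1
      (fun j hj => hP.xhat_le_of_mem hF hl (hU l hl).1 (fun r hr => (hU r hr).2) hj)
      (htrack l hl) (Or.inl (hU l hl).1)
    nlinarith
  refine ⟨hx, ?_⟩
  rcases hP.xhat_succ_eq_or hl k with h | h <;> rw [h]
  exacts [hx, by linarith [(hU l hl).2]]

theorem bound_add (hP : ProtocolVariant F Nb R γ c0 c1 α x xhat a M)
    (hF : (univ \ R).card ≤ F) (hγ : 0 ≤ γ) (hU : ∀ l ∈ R, x k l ≤ U ∧ xhat k l ≤ U)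
    {t : ℕ} (htrack : ∀ s < t, ∀ l ∈ R, |xhat (k + s) l - x (k + s) l| ≤ E) :
    ∀ l ∈ R, x (k + t) l ≤ U + t * E ∧ xhat (k + t) l ≤ U + t * E := by
  induction t with
  | zero => simpa using hU
  | succ t ih =>
    intro l hl
    show x (k + t + 1) l ≤ _ ∧ xhat (k + t + 1) l ≤ _
    have := hP.bound_succ hF hγ (ih fun s hs => htrack s (by omega)) (htrack t (by omega)) l hl
    push_cast
    constructor <;> linarith [this.1, this.2]

/-- The node keeps a value `≤ L + E` (its own state or, by `exists_mem_le`, a neighbor's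
broadcast value), which pulls its update below `L'`. -/
theorem notMem_aboveSet_succ (hP : ProtocolVariant F Nb R γ c0 c1 α x xhat a M)
    (hF : (univ \ R).card ≤ F) (hγ : 0 ≤ γ) (hi : i ∈ R)
    (hU : ∀ l ∈ R, x k l ≤ U ∧ xhat k l ≤ U) (htrack : |xhat k i - x k i| ≤ E)
    (htrack' : |xhat (k + 1) i - x (k + 1) i| ≤ E) {L L' : ℝ}
    (hL : γ * L + (1 - γ) * U + E ≤ L')
    (hcase : i ∉ aboveSet R (x k) (xhat k) L E ∨
      F < (Nb i \ aboveSet R (x k) (xhat k) L E).card) :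
    i ∉ aboveSet R (x (k + 1)) (xhat (k + 1)) L' E := by
  have hkept : x k i ≤ L + E ∨ ∃ j ∈ M k i, xhat k j ≤ L + E := by
    by_cases hxi : x k i ≤ L + E
    · exact Or.inl hxi
    have hE : 0 ≤ E := (abs_nonneg _).trans htrack
    refine Or.inr (hP.exists_mem_le hi sdiff_subset (hcase.resolve_left fun h => ?_)
      (fun j hj => le_of_notMem_aboveSet (mem_sdiff.1 hj).2) (not_le.1 hxi))
    linarith [((notMem_aboveSet_of_mem hi).1 h).1]
  have hx := hP.x_succ_le hγ hi (hU i hi).1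
    (fun j hj => hP.xhat_le_of_mem hF hi (hU i hi).1 (fun r hr => (hU r hr).2) hj) htrack hkept
  rw [notMem_aboveSet_of_mem hi]
  constructor <;> linarith [(abs_le.1 htrack').2]

/-- The levels `T t` and `T' t` of the two sides start at the midpoint of the range and
approach the drift bounds `U` and `U'` geometrically; when one side is empty after `N` steps,
that side has gained `γ ^ N` times half the spread. -/
theorem spread_add_le (hP : ProtocolVariant F Nb R γ c0 c1 α x xhat a M)
    (hF : (univ \ R).card ≤ F) (hRobust : IsRobust Nb (F + 1) (F + 1)) {N : ℕ}
    (hN : R.card = N) (hγ0 : 0 ≤ γ) (hγ : γ ≤ 1 / 2) (hR : R.Nonempty)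
    (htrack : ∀ t ≤ N, ∀ i ∈ R, |xhat (k + t) i - x (k + t) i| ≤ E) :
    spread R hR (x (k + N)) (xhat (k + N))
      ≤ (1 - γ ^ N / 2) * spread R hR (x k) (xhat k) + (2 * N + 3) * E := by
  have hE : 0 ≤ E := (abs_nonneg _).trans (htrack 0 N.zero_le _ hR.choose_spec)
  have htrack' : ∀ t ≤ N, ∀ i ∈ R, |(-xhat) (k + t) i - (-x) (k + t) i| ≤ E := by
    intro t ht i hi
    rw [Pi.neg_apply, Pi.neg_apply, Pi.neg_apply, Pi.neg_apply, neg_sub_neg, abs_sub_comm]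
    exact htrack t ht i hi
  set V := regularMax R hR (x k) (xhat k)
  set V' := regularMax R hR ((-x) k) ((-xhat) k)
  have hVV : 0 ≤ V + V' := spread_nonneg
  set U := V + N * E
  set U' := V' + N * E
  have hNE : ∀ t ≤ N, (t : ℝ) * E ≤ N * E := fun t ht => by gcongr
  have hNE0 : 0 ≤ (N : ℝ) * E := by positivity
  have hU : ∀ t ≤ N, ∀ i ∈ R, x (k + t) i ≤ U ∧ xhat (k + t) i ≤ U := fun t ht i hi => by
    have := hP.bound_add hF hγ0 ((regularMax_le_iff (hR := hR)).1 le_rfl) (t := t)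
      (fun s hs => htrack s (by omega)) i hi
    constructor <;> linarith [this.1, this.2, hNE t ht]
  have hU' : ∀ t ≤ N, ∀ i ∈ R, (-x) (k + t) i ≤ U' ∧ (-xhat) (k + t) i ≤ U' :=
    fun t ht i hi => by
      have := hP.neg.bound_add hF hγ0 ((regularMax_le_iff (hR := hR)).1 le_rfl) (t := t)
        (fun s hs => htrack' s (by omega)) i hi
      constructor <;> linarith [this.1, this.2, hNE t ht]
  set m := (V - V') / 2
  set T : ℕ → ℝ := fun t => U - γ ^ t * (U - m) + 2 * E
  set T' : ℕ → ℝ := fun t => U' - γ ^ t * (U' + m) + 2 * E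
  have hγE : 0 ≤ (1 - 2 * γ) * E := mul_nonneg (by linarith) hE
  have hT : ∀ t, γ * T t + (1 - γ) * U + E ≤ T (t + 1) := fun t => by
    simp only [T, pow_succ]
    nlinarith
  have hT' : ∀ t, γ * T' t + (1 - γ) * U' + E ≤ T' (t + 1) := fun t => by
    simp only [T', pow_succ]
    nlinarith
  have hdisj : ∀ t ≤ N, Disjoint (aboveSet R (x (k + t)) (xhat (k + t)) (T t) E)
      (aboveSet R ((-x) (k + t)) ((-xhat) (k + t)) (T' t) E) := fun t ht => by
    refine disjoint_aboveSet_neg (htrack t ht) hE ?_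
    have : γ ^ t ≤ 1 := pow_le_one₀ hγ0 (by linarith)
    have hUU : 0 ≤ U + U' := by linarith
    simp only [T, T']
    nlinarith [mul_nonneg (sub_nonneg.2 this) hUU]
  have hγN : 0 ≤ γ ^ N * (N * E) := by positivity
  rcases hRobust.inter_eq_empty_or_inter_eq_empty hF hN.le hdisj
      (fun t ht i hi h => hP.notMem_aboveSet_succ hF hγ0 hi (hU t ht.le) (htrack t ht.le i hi)
        (htrack (t + 1) ht i hi) (hT t) h)
      (fun t ht i hi h => hP.neg.notMem_aboveSet_succ hF hγ0 hi (hU' t ht.le)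
        (htrack' t ht.le i hi) (htrack' (t + 1) ht i hi) (hT' t) h) with h | h
  · have h₁ := regularMax_le_of_aboveSet_inter_eq_empty (hR := hR) h hE
    have h₂ := (regularMax_le_iff (hR := hR)).2 (hU' N le_rfl)
    change _ + regularMax R hR ((-x) (k + N)) ((-xhat) (k + N))
      ≤ (1 - γ ^ N / 2) * (V + V') + _
    simp only [T, U, U', m] at h₁ h₂ ⊢
    nlinarith
  · have h₁ := regularMax_le_of_aboveSet_inter_eq_empty (hR := hR) h hE
    have h₂ := (regularMax_le_iff (hR := hR)).2 (hU N le_rfl)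
    change _ + regularMax R hR ((-x) (k + N)) ((-xhat) (k + N))
      ≤ (1 - γ ^ N / 2) * (V + V') + _
    simp only [T', U, U', m] at h₁ h₂ ⊢
    nlinarith

open Filter in
theorem eventually_spread_le (hP : ProtocolVariant F Nb R γ c0 c1 α x xhat a M)
    (hF : (univ \ R).card ≤ F) (hRobust : IsRobust Nb (F + 1) (F + 1)) {N : ℕ}
    (hN : R.card = N) (hR : R.Nonempty) (hγ0 : 0 < γ) (hγ : γ ≤ 1 / 2) (hc0 : 0 ≤ c0)
    (hα : 0 < α) {ε : ℝ} (hε : 0 < ε) :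
    ∀ᶠ k in atTop, spread R hR (x k) (xhat k) ≤ 2 * (2 * N + 3) * c0 / γ ^ N + ε := by
  have hN0 : 0 < N := hN ▸ hR.card_pos
  have hγN : 0 < γ ^ N := pow_pos hγ0 N
  have hγN1 : γ ^ N ≤ 1 := pow_le_one₀ hγ0.le (by linarith)
  set E := c0 + ε * γ ^ N / (4 * (2 * N + 3))
  have hcE : c0 < E := lt_add_of_pos_right _ (by positivity)
  obtain ⟨k₀, hk₀⟩ :=
    eventually_atTop.1 (hP.eventually_abs_xhat_sub_x_le hα (hc0.trans hcE.le) hcE)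
  have hwindow : ∀ k ≥ k₀, spread R hR (x (k + N)) (xhat (k + N))
      ≤ (1 - γ ^ N / 2) * spread R hR (x k) (xhat k) + (2 * N + 3) * E :=
    fun k hk => hP.spread_add_le hF hRobust hN hγ0.le hγ hR fun t _ => hk₀ (k + t) (by omega)
  refine (eventually_le_of_le_mul_add (D := fun k => spread R hR (x k) (xhat k))
    hN0 (fun k => spread_nonneg) (by linarith) (by linarith) (by positivity) (half_pos hε)
    hwindow).mono fun k hk => hk.trans (le_of_eq ?_)
  simp only [E]
  field_simp
  ring

end ProtocolVariant

theorem protocolVariant_sufficiency_general {n F N : ℕ} (Nb : Fin n → Finset (Fin n))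
    (R : Finset (Fin n)) (hF : (Finset.univ \ R).card ≤ F)
    (hRobust : IsRobust Nb (F + 1) (F + 1))
    (hN : R.card = N)
    (γ c0 c1 α c : ℝ) (hγ0 : 0 < γ) (hγ : γ ≤ 1 / 2)
    (hc0 : 0 ≤ c0) (hα : 0 < α) (hc : 0 ≤ c)
    (hc0c : c0 ≤ γ ^ N * c / (8 * N))
    (x xhat : ℕ → Fin n → ℝ) (a : ℕ → Fin n → Fin n → ℝ)
    (M : ℕ → Fin n → Finset (Fin n))
    (hP : ProtocolVariant F Nb R γ c0 c1 α x xhat a M) :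
    ∀ i ∈ R, ∀ j ∈ R,
      Filter.limsup (fun k => |x k i - x k j|) Filter.atTop ≤ c := by
  intro i hi j hj
  have hR : R.Nonempty := ⟨i, hi⟩
  refine limsup_le_of_forall_eventually_le (fun k => abs_nonneg _) fun ε hε => ?_
  rcases eq_or_ne i j with rfl | hij
  · exact .of_forall fun k => by rw [sub_self, abs_zero]; linarith
  have hN2 : (2 : ℝ) ≤ N := by exact_mod_cast hN ▸ one_lt_card.2 ⟨i, hi, j, hj, hij⟩
  have hγN : 0 < γ ^ N := pow_pos hγ0 N
  have hbound : 2 * (2 * N + 3) * c0 / γ ^ N ≤ c := by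
    rw [le_div_iff₀ (by positivity)] at hc0c
    rw [div_le_iff₀ hγN]
    nlinarith [mul_nonneg hγN.le hc]
  filter_upwards [hP.eventually_spread_le hF hRobust hN hR hγ0 hγ hc0 hα hε] with k hk
  linarith [abs_sub_le_spread (hR := hR) (y := x k) (yhat := xhat k) hi hj]

/-- Claim of Remark 1: for the variant update rule
`x_i(k+1) = x_i(k) + Σ_{j∈M_i(k)} a_{ij}(k)(x̂_j(k) - x̂_i(k))` with the same MSR
filter, weight conditions and event-triggered broadcast rule as in Protocol 1:
if the graph is `(F+1,F+1)`-robust, `N = |R| ≥ 1`, `c ≥ 0`, and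
`c0 ≤ γ^N·c/(8N)`, then `limsup_{k→∞} |x_i(k) - x_j(k)| ≤ c` for all regular
`i, j ∈ R`, for every behavior of the malicious nodes, all initial values, and all
admissible weight choices. -/
theorem protocolVariant_sufficiency {n F N : ℕ} (Nb : Fin n → Finset (Fin n))
    (R : Finset (Fin n)) (hF : (Finset.univ \ R).card ≤ F)
    (hRobust : IsRobust Nb (F + 1) (F + 1))
    (hN : R.card = N) (hN1 : 1 ≤ N)
    (γ c0 c1 α c : ℝ) (hγ0 : 0 < γ) (hγ : γ ≤ 1 / 2)
    (hc0 : 0 ≤ c0) (hc1 : 0 ≤ c1) (hα : 0 < α) (hc : 0 ≤ c)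
    (hc0c : c0 ≤ γ ^ N * c / (8 * N))
    (x xhat : ℕ → Fin n → ℝ) (a : ℕ → Fin n → Fin n → ℝ)
    (M : ℕ → Fin n → Finset (Fin n))
    (hP : ProtocolVariant F Nb R γ c0 c1 α x xhat a M) :
    ∀ i ∈ R, ∀ j ∈ R,
      Filter.limsup (fun k => |x k i - x k j|) Filter.atTop ≤ c :=
  protocolVariant_sufficiency_general Nb R hF hRobust hN γ c0 c1 α c hγ0 hγ hc0 hα hc hc0c x xhat a
    M hP
end
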